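/- arXiv:2109.07568 — 5 statements merged into one kernel-verified Lean document; each statement's English description precedes it below -/
import Mathlib

section
/- Let X be a graph, A its adjacency matrix with spectral idempotents E_1,...,E_d, and let G be a group of automorphisms of X acting transitively on the vertices. Then any maximal set B of pairwise strongly cospectral vertices is a block of imprimitivity for the action of G: for every g in G, either B^g = B or B^g ∩ B = ∅. -/
open Matrix

/-- `E` is the orthogonal projection onto the eigenspace of `A` for the eigenvalue `μ`:
it is a symmetric idempotent whose range is contained in the eigenspace and which
fixes every eigenvector. -/
def IsEigenProjection {V : Type*} [Fintype V] (A : Matrix V V ℝ) (μ : ℝ)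
    (E : Matrix V V ℝ) : Prop :=
  E * E = E ∧ E.IsSymm ∧
    (∀ x : V → ℝ, A.mulVec (E.mulVec x) = μ • E.mulVec x) ∧
    (∀ y : V → ℝ, A.mulVec y = μ • y → E.mulVec y = y)

/-- Vertices `u` and `v` are strongly cospectral (w.r.t. the symmetric matrix `A`):
`E e_u = ± E e_v` for every spectral idempotent `E` of `A`. -/
def StronglyCospectral {V : Type*} [Fintype V] [DecidableEq V]
    (A : Matrix V V ℝ) (u v : V) : Prop :=
  ∀ (μ : ℝ) (E : Matrix V V ℝ), IsEigenProjection A μ E →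
    E.mulVec (Pi.single u 1) = E.mulVec (Pi.single v 1) ∨
    E.mulVec (Pi.single u 1) = -E.mulVec (Pi.single v 1)

lemma SC_trans' {V : Type*} [Fintype V] [DecidableEq V] {A : Matrix V V ℝ} {u v w : V}
    (h1 : StronglyCospectral A u w) (h2 : StronglyCospectral A v w) :
    StronglyCospectral A u v := by
  intro μ E hE
  rcases h1 μ E hE with h1' | h1' <;> rcases h2 μ E hE with h2' | h2'
  · left; rw [h1', h2']
  · right; rw [h1', h2', neg_neg]
  · right; rw [h1', h2']
  · left; rw [h1', h2']

lemma SC_map {V : Type*} [Fintype V] [DecidableEq V] (A : Matrix V V ℝ) (g : Equiv.Perm V)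
    (hA : ∀ i j, A (g i) (g j) = A i j) {u v : V}
    (h : StronglyCospectral A u v) : StronglyCospectral A (g u) (g v) := by
  intro μ E hE
  obtain ⟨hEE, hSym, hEig, hFix⟩ := hE
  -- A is invariant under the relabelling by g
  have hAsub : A.submatrix g g = A := by
    ext i j; exact hA i j
  have hAsub' : A.submatrix g.symm g.symm = A := by
    ext i j
    have := hA (g.symm i) (g.symm j)
    simpa using this.symm
  have hcomm : ∀ y : V → ℝ, A.mulVec (y ∘ g) = (A.mulVec y) ∘ g := by
    intro y; funext i
    simp only [mulVec, dotProduct, Function.comp_apply]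
    rw [← Equiv.sum_comp g (fun j => A (g i) j * y j)]
    exact Finset.sum_congr rfl fun j _ => by rw [hA]
  set E' : Matrix V V ℝ := E.submatrix g g with hE'def
  have hE'mulVec : ∀ x : V → ℝ, E'.mulVec x = (E.mulVec (x ∘ g.symm)) ∘ g := by
    intro x; exact submatrix_mulVec_equiv E x g g
  have hE'proj : IsEigenProjection A μ E' := by
    refine ⟨?_, ?_, ?_, ?_⟩
    · rw [hE'def, submatrix_mul_equiv, hEE]
    · ext i j
      simp only [transpose_apply, hE'def, submatrix_apply]
      exact (congrFun (congrFun hSym (g j)) (g i)).symm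
    · intro x
      rw [hE'mulVec x, hcomm, hEig]
      rfl
    · intro y hy
      have h1 := hcomm (y ∘ g.symm)
      have h2 : (y ∘ g.symm) ∘ ⇑g = y := by funext j; simp
      rw [h2] at h1
      have hy' : A.mulVec (y ∘ g.symm) = μ • (y ∘ g.symm) := by
        funext i
        have h3 := congrFun h1 (g.symm i)
        simp only [Function.comp_apply, Equiv.apply_symm_apply] at h3
        rw [← h3, hy]
        rfl
      rw [hE'mulVec y, hFix _ hy']
      funext i; simp
  have key := h μ E' hE'proj
  have hsingle : ∀ a : V, (Pi.single a 1 : V → ℝ) ∘ g.symm = Pi.single (g a) 1 := by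
    intro a
    funext j
    simp only [Function.comp_apply, Pi.single_apply]
    by_cases hj : j = g a
    · simp [hj]
    · rw [if_neg hj, if_neg]
      intro hc
      exact hj (by rw [← hc]; simp)
  rw [hE'mulVec, hE'mulVec, hsingle, hsingle] at key
  rcases key with key | key
  · left
    funext i
    have := congrFun key (g.symm i)
    simpa using this
  · right
    funext i
    have := congrFun key (g.symm i)
    simpa using this

theorem stmt0 {V : Type*} [Fintype V] [DecidableEq V] (X : SimpleGraph V)
    [DecidableRel X.Adj] (G : Subgroup (Equiv.Perm V))
    (hAut : ∀ g ∈ G, ∀ u v : V, X.Adj (g u) (g v) ↔ X.Adj u v)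
    (hTrans : ∀ u v : V, ∃ g ∈ G, g u = v)
    (B : Set V)
    (hB : ∀ u ∈ B, ∀ v ∈ B, StronglyCospectral (X.adjMatrix ℝ) u v)
    (hmax : ∀ B' : Set V, B ⊆ B' →
      (∀ u ∈ B', ∀ v ∈ B', StronglyCospectral (X.adjMatrix ℝ) u v) → B' = B) :
    ∀ g ∈ G, (⇑g) '' B = B ∨ ((⇑g) '' B) ∩ B = ∅ := by
  intro g hg
  by_cases hint : ((⇑g) '' B) ∩ B = ∅
  · exact Or.inr hint
  left
  -- get a common vertex w = g c with c ∈ B and w ∈ B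
  obtain ⟨w, hw⟩ := Set.nonempty_iff_ne_empty.mpr hint
  obtain ⟨⟨c, hcB, hcw⟩, hwB⟩ := hw
  have hAentry : ∀ i j, (X.adjMatrix ℝ) (g i) (g j) = (X.adjMatrix ℝ) i j := by
    intro i j
    simp only [SimpleGraph.adjMatrix_apply]
    by_cases h : X.Adj i j
    · rw [if_pos h, if_pos ((hAut g hg i j).mpr h)]
    · rw [if_neg h, if_neg (fun hc => h ((hAut g hg i j).mp hc))]
  -- every element of B ∪ g '' B is strongly cospectral with w
  have hkey : ∀ u ∈ B ∪ (⇑g) '' B, StronglyCospectral (X.adjMatrix ℝ) u w := by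
    rintro u (huB | ⟨a, haB, rfl⟩)
    · exact hB u huB w hwB
    · rw [← hcw]
      exact SC_map _ g hAentry (hB a haB c hcB)
  have hsub : (⇑g) '' B ⊆ B := by
    have := hmax (B ∪ (⇑g) '' B) Set.subset_union_left
      (fun u hu v hv => SC_trans' (hkey u hu) (hkey v hv))
    exact Set.subset_union_right.trans this.subset
  -- g '' B ⊆ B and they have the same finite cardinality, so equal
  exact Set.eq_of_subset_of_ncard_le hsub
    (le_of_eq (Set.ncard_image_of_injective B g.injective).symm) (Set.toFinite B)
end

section
/- In any Cayley graph X(G, C) (not necessarily normal), every vertex g that is strongly cospectral to the identity vertex satisfies g² = 1. -/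
open Matrix

/-- The adjacency matrix of the Cayley graph `X(G, C)`: `g ~ h` iff `h * g⁻¹ ∈ C`. -/
def cayleyAdj {G : Type*} [Group G] [Fintype G] [DecidableEq G] (C : Finset G) :
    Matrix G G ℝ :=
  Matrix.of fun g h => if h * g⁻¹ ∈ C then 1 else 0

section aux

variable {V : Type*} [Fintype V] [DecidableEq V]

lemma aux_sum_mulVec {ι : Type*} (s : Finset ι) (M : ι → Matrix V V ℝ) (v : V → ℝ) :
    (∑ i ∈ s, M i) *ᵥ v = ∑ i ∈ s, (M i *ᵥ v) := by
  ext x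
  simp only [Matrix.mulVec, dotProduct, Finset.sum_apply, Matrix.sum_apply,
    Finset.sum_mul]
  rw [Finset.sum_comm]

lemma aux_eq_of_mulVec (M N : Matrix V V ℝ) (h : ∀ x, M *ᵥ x = N *ᵥ x) : M = N := by
  ext i j
  have := congrFun (h (Pi.single j 1)) i
  simpa [Matrix.mulVec_single] using this

/-- The spectral projection attached to a symmetric real matrix and a value `μ`. -/
noncomputable def specProj (A : Matrix V V ℝ) (hA : A.IsHermitian) (μ : ℝ) : Matrix V V ℝ :=
  (hA.eigenvectorUnitary : Matrix V V ℝ) *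
    Matrix.diagonal (fun i => if hA.eigenvalues i = μ then (1:ℝ) else 0) *
    star (hA.eigenvectorUnitary : Matrix V V ℝ)

lemma specProj_isEigenProjection (A : Matrix V V ℝ) (hA : A.IsHermitian) (μ : ℝ) :
    IsEigenProjection A μ (specProj A hA μ) := by
  set U : Matrix V V ℝ := (hA.eigenvectorUnitary : Matrix V V ℝ) with hU
  have hsU : star U * U = 1 := Unitary.coe_star_mul_self _
  have hUs : U * star U = 1 := Unitary.coe_mul_star_self _
  set D : Matrix V V ℝ :=
    Matrix.diagonal (fun i => if hA.eigenvalues i = μ then (1:ℝ) else 0) with hD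
  have hspec : A = U * Matrix.diagonal hA.eigenvalues * star U := by
    have := hA.spectral_theorem
    simpa [RCLike.ofReal_real_eq_id] using this
  have hDD : D * D = D := by
    rw [hD, Matrix.diagonal_mul_diagonal]
    exact congrArg Matrix.diagonal (funext fun i => by
      by_cases h : hA.eigenvalues i = μ <;> simp [h])
  have hEE : specProj A hA μ * specProj A hA μ = specProj A hA μ := by
    unfold specProj
    rw [← hU, ← hD]
    calc U * D * star U * (U * D * star U) = U * (D * (star U * U) * D) * star U := by
          noncomm_ring
      _ = U * D * star U := by rw [hsU, mul_one, hDD]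
  have hsymm : (specProj A hA μ).IsSymm := by
    have hstar : star (specProj A hA μ) = specProj A hA μ := by
      unfold specProj
      rw [← hU, ← hD]
      simp only [StarMul.star_mul, star_star]
      rw [hD, Matrix.star_eq_conjTranspose, Matrix.diagonal_conjTranspose]
      simp [mul_assoc]
    rw [Matrix.IsSymm, ← Matrix.conjTranspose_eq_transpose_of_trivial,
      ← Matrix.star_eq_conjTranspose, hstar]
  have hAE : A * specProj A hA μ = μ • specProj A hA μ := by
    unfold specProj
    rw [← hU, ← hD, hspec]
    have key : Matrix.diagonal hA.eigenvalues * D = μ • D := by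
      rw [hD, Matrix.diagonal_mul_diagonal, ← Matrix.diagonal_smul]
      exact congrArg Matrix.diagonal (funext fun i => by
        by_cases h : hA.eigenvalues i = μ <;> simp [h])
    calc U * Matrix.diagonal hA.eigenvalues * star U * (U * D * star U)
        = U * (Matrix.diagonal hA.eigenvalues * (star U * U) * D) * star U := by noncomm_ring
      _ = U * (Matrix.diagonal hA.eigenvalues * D) * star U := by rw [hsU, mul_one]
      _ = μ • (U * D * star U) := by rw [key]; simp [Matrix.mul_smul, Matrix.smul_mul]
  refine ⟨hEE, hsymm, ?_, ?_⟩
  · intro x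
    rw [Matrix.mulVec_mulVec, hAE, Matrix.smul_mulVec]
  · intro y hy
    set z := star U *ᵥ y with hz
    have hyz : U *ᵥ z = y := by
      rw [hz, Matrix.mulVec_mulVec, hUs, Matrix.one_mulVec]
    have hdz : Matrix.diagonal hA.eigenvalues *ᵥ z = μ • z := by
      have h0 : A *ᵥ y = μ • y := hy
      rw [hspec] at h0
      have h2 := congrArg (fun w => star U *ᵥ w) h0
      simp only [Matrix.mulVec_mulVec, Matrix.mulVec_smul] at h2
      calc Matrix.diagonal hA.eigenvalues *ᵥ z
          = (star U * (U * Matrix.diagonal hA.eigenvalues * star U)) *ᵥ y := by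
            rw [hz, Matrix.mulVec_mulVec]
            congr 1
            rw [← mul_assoc, ← mul_assoc, hsU, one_mul]
        _ = star U *ᵥ (U * Matrix.diagonal hA.eigenvalues * star U) *ᵥ y := by
            rw [Matrix.mulVec_mulVec]
        _ = μ • z := by rw [h0, Matrix.mulVec_smul, hz]
    have hDz : D *ᵥ z = z := by
      funext i
      have hi := congrFun hdz i
      simp only [Matrix.mulVec_diagonal, Pi.smul_apply, smul_eq_mul] at hi
      simp only [hD, Matrix.mulVec_diagonal]
      by_cases h : hA.eigenvalues i = μ
      · simp [h]
      · have hzi : z i = 0 := by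
          by_contra hzi
          exact h (mul_right_cancel₀ hzi hi)
        simp [h, hzi]
    unfold specProj
    rw [← hU, ← hD, ← Matrix.mulVec_mulVec, ← Matrix.mulVec_mulVec, ← hz, hDz, hyz]

lemma specProj_sum (A : Matrix V V ℝ) (hA : A.IsHermitian) :
    ∑ μ ∈ Finset.image hA.eigenvalues Finset.univ, specProj A hA μ = 1 := by
  set U : Matrix V V ℝ := (hA.eigenvectorUnitary : Matrix V V ℝ) with hU
  have hUs : U * star U = 1 := Unitary.coe_mul_star_self _
  have hsum : ∑ μ ∈ Finset.image hA.eigenvalues Finset.univ,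
      Matrix.diagonal (fun i => if hA.eigenvalues i = μ then (1:ℝ) else 0) = 1 := by
    ext i j
    simp only [Matrix.sum_apply, Matrix.diagonal_apply, Matrix.one_apply]
    by_cases hij : i = j
    · subst hij
      simp only [if_pos rfl, if_true, eq_self_iff_true]
      rw [Finset.sum_ite_eq (Finset.image hA.eigenvalues Finset.univ) (hA.eigenvalues i)
        (fun _ => (1:ℝ))]
      simp [Finset.mem_image]
    · simp [hij]
  calc ∑ μ ∈ Finset.image hA.eigenvalues Finset.univ, specProj A hA μ
      = U * (∑ μ ∈ Finset.image hA.eigenvalues Finset.univ,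
          Matrix.diagonal (fun i => if hA.eigenvalues i = μ then (1:ℝ) else 0)) * star U := by
        unfold specProj
        rw [← hU, Finset.mul_sum, Finset.sum_mul]
    _ = 1 := by rw [hsum, mul_one, hUs]

end aux

theorem stmt4 {G : Type*} [Group G] [Fintype G] [DecidableEq G] (C : Finset G)
    (h1 : (1 : G) ∉ C) (hinv : ∀ c ∈ C, c⁻¹ ∈ C)
    (g : G) (hg : StronglyCospectral (cayleyAdj C) 1 g) :
    g ^ 2 = 1 := by
  set A := cayleyAdj C with hAdef
  have hAsymm : Aᵀ = A := by
    ext i j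
    simp only [hAdef, cayleyAdj, Matrix.transpose_apply, Matrix.of_apply]
    have hiff : i * j⁻¹ ∈ C ↔ j * i⁻¹ ∈ C := by
      constructor
      · intro h
        simpa [_root_.mul_inv_rev] using hinv _ h
      · intro h
        simpa [_root_.mul_inv_rev] using hinv _ h
    exact if_congr hiff rfl rfl
  have hA : A.IsHermitian := by
    rw [Matrix.IsHermitian, Matrix.conjTranspose_eq_transpose_of_trivial, hAsymm]
  set P : Matrix G G ℝ := Matrix.of (fun x y => if y = x * g⁻¹ then (1:ℝ) else 0) with hPdef
  have hPv : ∀ (v : G → ℝ), P *ᵥ v = fun x => v (x * g⁻¹) := by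
    intro v
    funext x
    simp [Matrix.mulVec, dotProduct, hPdef, ite_mul, Finset.sum_ite_eq']
  have hPsingle : ∀ u : G, P *ᵥ (Pi.single u 1) = Pi.single (u * g) (1:ℝ) := by
    intro u
    rw [hPv]
    funext x
    simp [Pi.single_apply, mul_inv_eq_iff_eq_mul]
  have hPA : P * A = A * P := by
    apply aux_eq_of_mulVec
    intro v
    rw [← Matrix.mulVec_mulVec, ← Matrix.mulVec_mulVec, hPv, hPv]
    funext x
    show (A *ᵥ v) (x * g⁻¹) = (A *ᵥ fun y => v (y * g⁻¹)) x
    simp only [Matrix.mulVec, dotProduct, hAdef, cayleyAdj, Matrix.of_apply]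
    apply Fintype.sum_equiv (Equiv.mulRight g)
    intro y
    simp [_root_.mul_inv_rev, mul_assoc]
  have hPtA : Pᵀ * A = A * Pᵀ := by
    have := congrArg Matrix.transpose hPA
    rw [Matrix.transpose_mul, Matrix.transpose_mul, hAsymm] at this
    exact this.symm
  have hcomm : ∀ μ (E : Matrix G G ℝ), IsEigenProjection A μ E → E * P = P * E := by
    intro μ E hE
    obtain ⟨hE1, hE2, hE3, hE4⟩ := hE
    have key : ∀ (Q : Matrix G G ℝ), Q * A = A * Q → E * Q * E = Q * E := by
      intro Q hQ
      apply aux_eq_of_mulVec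
      intro x
      have h5 : A *ᵥ (Q *ᵥ (E *ᵥ x)) = μ • (Q *ᵥ (E *ᵥ x)) := by
        rw [Matrix.mulVec_mulVec (E *ᵥ x) A Q, ← hQ, ← Matrix.mulVec_mulVec, hE3,
          Matrix.mulVec_smul]
      have h6 := hE4 _ h5
      calc (E * Q * E) *ᵥ x = E *ᵥ (Q *ᵥ (E *ᵥ x)) := by
            rw [Matrix.mulVec_mulVec, Matrix.mulVec_mulVec]
        _ = Q *ᵥ (E *ᵥ x) := h6
        _ = (Q * E) *ᵥ x := by rw [Matrix.mulVec_mulVec]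
    have k1 := key P hPA
    have k2 := key Pᵀ hPtA
    have hE2' : Eᵀ = E := hE2
    calc E * P = (Pᵀ * Eᵀ)ᵀ := by
          rw [Matrix.transpose_mul, Matrix.transpose_transpose, Matrix.transpose_transpose]
      _ = (E * Pᵀ * E)ᵀ := by rw [hE2', k2]
      _ = Eᵀ * (Pᵀ)ᵀ * Eᵀ := by
          rw [Matrix.transpose_mul, Matrix.transpose_mul, mul_assoc]
      _ = E * P * E := by rw [hE2', Matrix.transpose_transpose]
      _ = P * E := k1
  have key2 : ∀ μ (E : Matrix G G ℝ), IsEigenProjection A μ E →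
      E *ᵥ Pi.single (g ^ 2) 1 = E *ᵥ Pi.single (1 : G) 1 := by
    intro μ E hE
    have hc := hcomm μ E hE
    have hcv : ∀ v : G → ℝ, E *ᵥ (P *ᵥ v) = P *ᵥ (E *ᵥ v) := by
      intro v
      rw [Matrix.mulVec_mulVec, Matrix.mulVec_mulVec, hc]
    have e1 : (Pi.single (g ^ 2) (1:ℝ) : G → ℝ) = P *ᵥ Pi.single g 1 := by
      rw [hPsingle, ← sq]
    have e2 : (Pi.single g (1:ℝ) : G → ℝ) = P *ᵥ Pi.single (1 : G) 1 := by
      rw [hPsingle, one_mul]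
    rcases hg μ E hE with h | h
    · calc E *ᵥ Pi.single (g ^ 2) 1 = P *ᵥ (E *ᵥ Pi.single g 1) := by rw [e1, hcv]
        _ = P *ᵥ (E *ᵥ Pi.single (1 : G) 1) := by rw [h]
        _ = E *ᵥ (P *ᵥ Pi.single (1 : G) 1) := (hcv _).symm
        _ = E *ᵥ Pi.single g 1 := by rw [← e2]
        _ = E *ᵥ Pi.single (1 : G) 1 := h.symm
    · have h' : E *ᵥ Pi.single g 1 = -(E *ᵥ Pi.single (1 : G) 1) := by
        rw [h, neg_neg]
      calc E *ᵥ Pi.single (g ^ 2) 1 = P *ᵥ (E *ᵥ Pi.single g 1) := by rw [e1, hcv]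
        _ = -(P *ᵥ (E *ᵥ Pi.single (1 : G) 1)) := by rw [h', Matrix.mulVec_neg]
        _ = -(E *ᵥ (P *ᵥ Pi.single (1 : G) 1)) := by rw [hcv]
        _ = -(E *ᵥ Pi.single g 1) := by rw [← e2]
        _ = E *ᵥ Pi.single (1 : G) 1 := by rw [h', neg_neg]
  have hfinal : (Pi.single (g ^ 2) (1:ℝ) : G → ℝ) = Pi.single (1 : G) (1:ℝ) := by
    calc (Pi.single (g ^ 2) (1:ℝ) : G → ℝ)
        = (1 : Matrix G G ℝ) *ᵥ Pi.single (g ^ 2) 1 := (Matrix.one_mulVec _).symm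
      _ = (∑ μ ∈ Finset.image hA.eigenvalues Finset.univ, specProj A hA μ) *ᵥ
            Pi.single (g ^ 2) 1 := by rw [specProj_sum A hA]
      _ = ∑ μ ∈ Finset.image hA.eigenvalues Finset.univ,
            (specProj A hA μ *ᵥ Pi.single (g ^ 2) 1) := aux_sum_mulVec _ _ _
      _ = ∑ μ ∈ Finset.image hA.eigenvalues Finset.univ,
            (specProj A hA μ *ᵥ Pi.single (1 : G) 1) :=
          Finset.sum_congr rfl fun μ _ => key2 μ _ (specProj_isEigenProjection A hA μ)
      _ = (∑ μ ∈ Finset.image hA.eigenvalues Finset.univ, specProj A hA μ) *ᵥ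
            Pi.single (1 : G) 1 := (aux_sum_mulVec _ _ _).symm
      _ = Pi.single (1 : G) (1:ℝ) := by rw [specProj_sum A hA, Matrix.one_mulVec]
  have hval := congrFun hfinal (g ^ 2)
  by_contra hne
  simp [Pi.single_apply, hne] at hval
end

section
/- In a normal Cayley graph X = X(G, C), the set H of vertices strongly cospectral to the identity is a normal subgroup of G that is an elementary abelian 2-group (every nonidentity element has order 2 and H is abelian). -/
open Matrix

/-! Left and right translations of `G` are automorphisms of the normal Cayley graph, so they
commute with the adjacency matrix and hence fix each of its spectral idempotents:
`E (x * i * y) (x * j * y) = E i j`. Therefore, if `E e_1 = ± E e_g`, translating gives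
`E e_{x g y} = ± E e_{x y}` for all `x, y` with one sign. As the spectral idempotents
separate vertices, `(x, y) = (x, 1), (1, x)` shows that `g` is central, `(1, g), (1, 1)` that
`g * g = 1`, and chaining the relations for `a` and `b` that `a * b` is again strongly cospectral
to `1`. -/

section EigenProjection

variable {n : Type*} [Fintype n] {A E F : Matrix n n ℝ} {μ : ℝ}

theorem IsEigenProjection.mulVec_single_one [DecidableEq n] (hE : IsEigenProjection A μ E)
    (u : n) : E *ᵥ Pi.single u 1 = E u := by
  rw [Matrix.mulVec_single_one]
  exact funext fun i => hE.2.1.apply u i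

theorem IsEigenProjection.unique [DecidableEq n] (hE : IsEigenProjection A μ E)
    (hF : IsEigenProjection A μ F) : E = F := by
  obtain ⟨-, hEsymm, hErange, hEfix⟩ := hE
  obtain ⟨-, hFsymm, hFrange, hFfix⟩ := hF
  have hEF : E * F = F := ext_of_mulVec_single fun i => by
    rw [← mulVec_mulVec, hEfix _ (hFrange _)]
  have hFE : F * E = E := ext_of_mulVec_single fun i => by
    rw [← mulVec_mulVec, hFfix _ (hErange _)]
  calc E = (E * F)ᵀ := by rw [transpose_mul, hEsymm.eq, hFsymm.eq, hFE]
    _ = F := by rw [hEF, hFsymm.eq]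

theorem IsEigenProjection.submatrix {m : Type*} [Fintype m] (hE : IsEigenProjection A μ E)
    (σ : m ≃ n) : IsEigenProjection (A.submatrix σ σ) μ (E.submatrix σ σ) := by
  obtain ⟨hidem, hsymm, hrange, hfix⟩ := hE
  refine ⟨by rw [submatrix_mul_equiv, hidem], hsymm.submatrix σ, fun x => ?_, fun y hy => ?_⟩
  · simp only [submatrix_mulVec_equiv, Function.comp_assoc, Equiv.self_comp_symm,
      Function.comp_id, hrange]
    rfl
  · have hy' : A *ᵥ (y ∘ σ.symm) = μ • (y ∘ σ.symm) := by
      rw [submatrix_mulVec_equiv] at hy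
      ext i
      simpa using congrFun hy (σ.symm i)
    rw [submatrix_mulVec_equiv, hfix _ hy', Function.comp_assoc, Equiv.symm_comp_self,
      Function.comp_id]

theorem IsEigenProjection.conj [DecidableEq n] (hE : IsEigenProjection A μ E) {U : Matrix n n ℝ}
    (hU : U ∈ unitaryGroup n ℝ) : IsEigenProjection (U * A * star U) μ (U * E * star U) := by
  obtain ⟨hidem, hsymm, hrange, hfix⟩ := hE
  have hUU : ∀ v, star U *ᵥ (U *ᵥ v) = v := fun v => by
    rw [mulVec_mulVec, mem_unitaryGroup_iff'.mp hU, one_mulVec]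
  refine ⟨?_, ?_, fun x => ?_, fun y hy => ?_⟩
  · calc U * E * star U * (U * E * star U) = U * E * (star U * U) * E * star U := by
          simp only [Matrix.mul_assoc]
      _ = U * E * star U := by rw [mem_unitaryGroup_iff'.mp hU, Matrix.mul_one,
          Matrix.mul_assoc U E E, hidem]
  · rw [IsSymm, star_eq_conjTranspose, conjTranspose_eq_transpose_of_trivial, transpose_mul,
      transpose_mul, transpose_transpose, hsymm.eq, Matrix.mul_assoc]
  · simp only [← mulVec_mulVec, hUU, hrange, mulVec_smul]
  · simp only [← mulVec_mulVec] at hy ⊢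
    have hy' : A *ᵥ (star U *ᵥ y) = μ • (star U *ᵥ y) := by
      simpa only [hUU, mulVec_smul] using congrArg (star U *ᵥ ·) hy
    rw [hfix _ hy', mulVec_mulVec, mem_unitaryGroup_iff.mp hU, one_mulVec]

theorem isEigenProjection_diagonal [DecidableEq n] (d : n → ℝ) (μ : ℝ) :
    IsEigenProjection (diagonal d) μ (diagonal fun j => if d j = μ then 1 else 0) := by
  refine ⟨by simp [diagonal_mul_diagonal], isSymm_diagonal _, fun x => ?_, fun y hy => ?_⟩
  · ext i
    by_cases h : d i = μ <;> simp [mulVec_diagonal, h]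
  · ext i
    have hyi : (d i - μ) * y i = 0 := by
      simpa [mulVec_diagonal, sub_mul, sub_eq_zero] using congrFun hy i
    by_cases h : d i = μ
    · simp [mulVec_diagonal, h]
    · rw [mulVec_diagonal, if_neg h, zero_mul]
      exact ((mul_eq_zero.mp hyi).resolve_left (sub_ne_zero.mpr h)).symm

theorem Matrix.IsHermitian.exists_isEigenProjection [DecidableEq n] (hA : A.IsHermitian)
    (μ : ℝ) : ∃ E, IsEigenProjection A μ E := by
  have hdiag := (isEigenProjection_diagonal hA.eigenvalues μ).conj hA.eigenvectorUnitary.2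
  rw [hA.spectral_theorem]
  simpa using ⟨_, hdiag⟩

theorem Matrix.IsHermitian.eq_of_forall_isEigenProjection_mulVec_eq [DecidableEq n]
    (hA : A.IsHermitian) {w w' : n → ℝ}
    (h : ∀ μ E, IsEigenProjection A μ E → E *ᵥ w = E *ᵥ w') : w = w' := by
  set U : Matrix n n ℝ := (hA.eigenvectorUnitary : Matrix n n ℝ)
  have hU : U ∈ unitaryGroup n ℝ := hA.eigenvectorUnitary.2
  suffices hcoord : star U *ᵥ w = star U *ᵥ w' by
    simpa only [mulVec_mulVec, mem_unitaryGroup_iff.mp hU, one_mulVec]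
      using congrArg (U *ᵥ ·) hcoord
  funext j
  obtain ⟨E, hE⟩ := hA.exists_isEigenProjection (hA.eigenvalues j)
  set v : n → ℝ := (hA.eigenvectorBasis j).ofLp
  have hv : E *ᵥ v = v := hE.2.2.2 v (hA.mulVec_eigenvectorBasis j)
  have hcoordE : ∀ x, v ⬝ᵥ x = v ⬝ᵥ (E *ᵥ x) := fun x => by
    rw [dotProduct_mulVec, ← mulVec_transpose, hE.2.1.eq, hv]
  -- row `j` of `star U` is the eigenvector `v`
  calc (star U *ᵥ w) j = v ⬝ᵥ w := rfl
    _ = v ⬝ᵥ w' := by rw [hcoordE, h _ _ hE, ← hcoordE]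
    _ = (star U *ᵥ w') j := rfl

theorem Matrix.IsHermitian.eq_of_forall_isEigenProjection_apply_eq [DecidableEq n]
    (hA : A.IsHermitian) {u v : n} (h : ∀ μ E, IsEigenProjection A μ E → E u = E v) : u = v := by
  have hsingle : (Pi.single u 1 : n → ℝ) = Pi.single v 1 :=
    hA.eq_of_forall_isEigenProjection_mulVec_eq fun μ E hE => by
      rw [hE.mulVec_single_one u, hE.mulVec_single_one v, h μ E hE]
  simpa [Pi.single_apply] using congrFun hsingle u

end EigenProjection

theorem eq_or_eq_neg_iff_exists_mul_self_eq_one {R M : Type*} [Ring R] [NoZeroDivisors R]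
    [AddCommGroup M] [Module R M] {v w : M} :
    v = w ∨ v = -w ↔ ∃ s : R, s * s = 1 ∧ w = s • v := by
  constructor
  · rintro (rfl | rfl)
    · exact ⟨1, one_mul 1, (one_smul R _).symm⟩
    · exact ⟨-1, by simp, by rw [neg_one_smul, neg_neg]⟩
  · rintro ⟨s, hs, rfl⟩
    rcases mul_self_eq_one_iff.mp hs with rfl | rfl
    · exact Or.inl (one_smul R v).symm
    · exact Or.inr (by rw [neg_one_smul, neg_neg])

theorem stronglyCospectral_iff_exists_sign {V : Type*} [Fintype V] [DecidableEq V]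
    {A : Matrix V V ℝ} {u v : V} :
    StronglyCospectral A u v ↔
      ∀ μ E, IsEigenProjection A μ E → ∃ s : ℝ, s * s = 1 ∧ E v = s • E u := by
  refine forall₂_congr fun μ E => forall_congr' fun hE => ?_
  rw [hE.mulVec_single_one, hE.mulVec_single_one,
    eq_or_eq_neg_iff_exists_mul_self_eq_one (R := ℝ)]

section Cayley

variable {G : Type*} [Group G] [Fintype G] [DecidableEq G] {C : Finset G}

theorem cayleyAdj_isHermitian (hinv : ∀ c ∈ C, c⁻¹ ∈ C) : (cayleyAdj C).IsHermitian := by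
  refine IsHermitian.ext fun g h => ?_
  have hmem : g * h⁻¹ ∈ C ↔ h * g⁻¹ ∈ C :=
    ⟨fun hc => by simpa using hinv _ hc, fun hc => by simpa using hinv _ hc⟩
  simp [cayleyAdj, hmem]

theorem cayleyAdj_submatrix_mulLeft_mulRight (hnorm : ∀ x : G, ∀ c ∈ C, x⁻¹ * c * x ∈ C)
    (x y : G) :
    (cayleyAdj C).submatrix ((Equiv.mulLeft x).trans (Equiv.mulRight y))
      ((Equiv.mulLeft x).trans (Equiv.mulRight y)) = cayleyAdj C := by
  ext g h
  have hconj : x * h * y * (x * g * y)⁻¹ = x⁻¹⁻¹ * (h * g⁻¹) * x⁻¹ := by group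
  have hmem : x * h * y * (x * g * y)⁻¹ ∈ C ↔ h * g⁻¹ ∈ C := by
    refine ⟨fun hc => ?_, fun hc => hconj ▸ hnorm x⁻¹ _ hc⟩
    simpa [mul_assoc] using hnorm x _ hc
  simp only [cayleyAdj, submatrix_apply, of_apply, Equiv.trans_apply, Equiv.coe_mulLeft,
    Equiv.coe_mulRight, hmem]

theorem IsEigenProjection.cayleyAdj_apply_mul_mul (hnorm : ∀ x : G, ∀ c ∈ C, x⁻¹ * c * x ∈ C)
    {μ : ℝ} {E : Matrix G G ℝ} (hE : IsEigenProjection (cayleyAdj C) μ E) (x y i j : G) :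
    E (x * i * y) (x * j * y) = E i j := by
  have hσE := hE.submatrix ((Equiv.mulLeft x).trans (Equiv.mulRight y))
  rw [cayleyAdj_submatrix_mulLeft_mulRight hnorm] at hσE
  exact congrFun (congrFun (hσE.unique hE) i) j

theorem StronglyCospectral.exists_sign_mul_mul (hnorm : ∀ x : G, ∀ c ∈ C, x⁻¹ * c * x ∈ C)
    {g : G} (hg : StronglyCospectral (cayleyAdj C) 1 g) {μ : ℝ} {E : Matrix G G ℝ}
    (hE : IsEigenProjection (cayleyAdj C) μ E) :
    ∃ s : ℝ, s * s = 1 ∧ ∀ x y : G, E (x * g * y) = s • E (x * y) := by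
  obtain ⟨s, hs, hrow⟩ := stronglyCospectral_iff_exists_sign.mp hg μ E hE
  refine ⟨s, hs, fun x y => funext fun i => ?_⟩
  have hi : x * (x⁻¹ * i * y⁻¹) * y = i := by group
  calc E (x * g * y) i = E g (x⁻¹ * i * y⁻¹) := by
        rw [← hE.cayleyAdj_apply_mul_mul hnorm x y g, hi]
    _ = s * E 1 (x⁻¹ * i * y⁻¹) := congrFun hrow _
    _ = s * E (x * y) i := by rw [← hE.cayleyAdj_apply_mul_mul hnorm x y 1, mul_one, hi]

theorem StronglyCospectral.mul (hnorm : ∀ x : G, ∀ c ∈ C, x⁻¹ * c * x ∈ C) {a b : G}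
    (ha : StronglyCospectral (cayleyAdj C) 1 a) (hb : StronglyCospectral (cayleyAdj C) 1 b) :
    StronglyCospectral (cayleyAdj C) 1 (a * b) := by
  refine stronglyCospectral_iff_exists_sign.mpr fun μ E hE => ?_
  obtain ⟨s, hs, ha⟩ := ha.exists_sign_mul_mul hnorm hE
  obtain ⟨t, ht, hb⟩ := hb.exists_sign_mul_mul hnorm hE
  refine ⟨t * s, by linear_combination t * t * hs + ht, ?_⟩
  have hab : E (a * b) = t • E a := by simpa using hb a 1
  have ha1 : E a = s • E 1 := by simpa using ha 1 1
  rw [hab, ha1, smul_smul]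

variable (hinv : ∀ c ∈ C, c⁻¹ ∈ C) (hnorm : ∀ x : G, ∀ c ∈ C, x⁻¹ * c * x ∈ C)
include hinv hnorm

theorem StronglyCospectral.mem_center {g : G} (hg : StronglyCospectral (cayleyAdj C) 1 g) :
    g ∈ Subgroup.center G := by
  refine Subgroup.mem_center_iff.mpr fun x =>
    (cayleyAdj_isHermitian hinv).eq_of_forall_isEigenProjection_apply_eq fun μ E hE => ?_
  obtain ⟨s, -, htranslate⟩ := hg.exists_sign_mul_mul hnorm hE
  have hright : E (x * g) = s • E x := by simpa using htranslate x 1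
  have hleft : E (g * x) = s • E x := by simpa using htranslate 1 x
  rw [hright, hleft]

theorem StronglyCospectral.mul_self_eq_one {g : G}
    (hg : StronglyCospectral (cayleyAdj C) 1 g) : g * g = 1 :=
  (cayleyAdj_isHermitian hinv).eq_of_forall_isEigenProjection_apply_eq fun μ E hE => by
    obtain ⟨s, hs, htranslate⟩ := hg.exists_sign_mul_mul hnorm hE
    have hgg : E (g * g) = s • E g := by simpa using htranslate 1 g
    have hg1 : E g = s • E 1 := by simpa using htranslate 1 1
    rw [hgg, hg1, smul_smul, hs, one_smul]

def stronglyCospectralSubgroup : Subgroup G where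
  carrier := {g | StronglyCospectral (cayleyAdj C) 1 g}
  one_mem' _ _ _ := Or.inl rfl
  mul_mem' := StronglyCospectral.mul hnorm
  inv_mem' hg := by rwa [inv_eq_of_mul_eq_one_right (hg.mul_self_eq_one hinv hnorm)]

end Cayley

theorem stmt5_general {G : Type*} [Group G] [Fintype G] [DecidableEq G] (C : Finset G)
    (hinv : ∀ c ∈ C, c⁻¹ ∈ C)
    (hnorm : ∀ x : G, ∀ c ∈ C, x⁻¹ * c * x ∈ C) :
    ∃ N : Subgroup G,
      (N : Set G) = {g : G | StronglyCospectral (cayleyAdj C) 1 g} ∧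
      N.Normal ∧ (∀ h ∈ N, h ^ 2 = 1) ∧ (∀ a ∈ N, ∀ b ∈ N, a * b = b * a) := by
  have hcentral : ∀ a ∈ stronglyCospectralSubgroup hinv hnorm, ∀ x : G, x * a = a * x :=
    fun a ha => Subgroup.mem_center_iff.mp (StronglyCospectral.mem_center hinv hnorm ha)
  refine ⟨stronglyCospectralSubgroup hinv hnorm, rfl, ⟨fun a ha x => ?_⟩, fun h hh => ?_,
    fun a ha b _ => (hcentral a ha b).symm⟩
  · rwa [hcentral a ha x, mul_inv_cancel_right]
  · exact (pow_two h).trans (StronglyCospectral.mul_self_eq_one hinv hnorm hh)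

theorem stmt5 {G : Type*} [Group G] [Fintype G] [DecidableEq G] (C : Finset G)
    (h1 : (1 : G) ∉ C) (hinv : ∀ c ∈ C, c⁻¹ ∈ C)
    (hnorm : ∀ x : G, ∀ c ∈ C, x⁻¹ * c * x ∈ C) :
    ∃ N : Subgroup G,
      (N : Set G) = {g : G | StronglyCospectral (cayleyAdj C) 1 g} ∧
      N.Normal ∧ (∀ h ∈ N, h ^ 2 = 1) ∧ (∀ a ∈ N, ∀ b ∈ N, a * b = b * a) :=
  stmt5_general C hinv hnorm
end

section
/- In a cubelike graph on 2^d vertices with d ≥ 3, any set of pairwise strongly cospectral vertices has size at most 2^{⌈d/2⌉ − 1}. -/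
/-
The Walsh characters `χ_b(x) = (-1)^(b ⬝ x)` form an orthogonal eigenbasis of every cubelike
graph, with eigenvalues `λ(b) = ∑_{c ∈ C} χ_b(c)`, so the spectral idempotent for `μ` is
`2⁻ᵈ ∑_{λ(b) = μ} χ_b χ_bᵀ`. Reading off the coordinate of `E e_u = ± E e_v` along `χ_a` and
`χ_b` for `λ(a) = λ(b)` gives `χ_{a-b}(u - v) = 1`, so a strongly cospectral set `S` lies in a
coset of `K⊥`, where `K` is spanned by the differences within eigenvalue classes, while each
eigenvalue class lies in a coset of `K`. Writing `s = dim K`, this gives `|S| ≤ 2^(d-s)` and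
multiplicities at most `2^s`. Finally, if `2s ≤ d` then the `2^d - 1` eigenvalues `λ(b)`, `b ≠ 0`,
are integers of the parity of `|C|` taking each value at most `2^s` times, and a layer-by-layer
count shows that their squares sum to more than `2^(2d-2)`, whereas by Parseval the sum is
`2^d |C| - |C|² ≤ 2^(2d-2)`. Hence `2s > d`.
-/
open Matrix

/-- The adjacency matrix of the Cayley graph `X(G, C)` of an additive group:
`g ~ h` iff `h - g ∈ C`. -/
def addCayleyAdj {G : Type*} [AddGroup G] [Fintype G] [DecidableEq G] (C : Finset G) :
    Matrix G G ℝ :=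
  Matrix.of fun g h => if h - g ∈ C then 1 else 0

open Finset Module

section LayerCount

lemma sum_range_two_mul_add_one_add (n e : ℕ) :
    ∑ j ∈ range n, (2 * j + 1 + e : ℤ) = n * (n + e) := by
  induction n with
  | zero => simp
  | succ n ih => rw [sum_range_succ, ih]; push_cast; ring

lemma sum_range_layer (L : ℕ) (N M e : ℤ) :
    3 * ∑ j ∈ range L, (2 * j + 1 + e) * (N - M * (2 * j + 1 + e)) =
      3 * N * L * (L + e) - M * L * (4 * L ^ 2 + 6 * e * L + 3 * e ^ 2 - 1) := by
  induction L with
  | zero => simp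
  | succ n ih => rw [sum_range_succ, mul_add, ih]; push_cast; ring

lemma sq_lt_layer_sum {e M k : ℕ} {N : ℤ} (he : e ≤ 1) (hk : 2 ≤ k) (hM : 1 ≤ M)
    (hMk : M ≤ 2 * k) (hN : N + 1 = 2 * M * k) :
    ((M * k : ℕ) : ℤ) ^ 2 <
      4 * ∑ j ∈ range (k - e), (2 * j + 1 + e) * (N - M * (2 * j + 1 + e)) + e * N := by
  have hsum := sum_range_layer (k - e) N M e
  have hk' : (2 : ℤ) ≤ k := by exact_mod_cast hk
  have hM' : (1 : ℤ) ≤ M := by exact_mod_cast hM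
  have hMk' : (M : ℤ) ≤ 2 * k := by exact_mod_cast hMk
  interval_cases e
  · simp only [Nat.sub_zero, CharP.cast_eq_zero, add_zero, zero_mul] at hsum ⊢
    push_cast
    nlinarith [mul_nonneg (sub_nonneg.2 hM') (sub_nonneg.2 hMk'),
      mul_nonneg (sub_nonneg.2 hM') (sub_nonneg.2 hk')]
  · rw [Nat.cast_sub (by omega)] at hsum
    push_cast at hsum ⊢
    nlinarith [mul_nonneg (sub_nonneg.2 hM') (sub_nonneg.2 hMk'),
      mul_nonneg (sub_nonneg.2 hM') (sub_nonneg.2 hk')]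

lemma sum_range_mul_card_lt_le {α : Type*} (P : Finset α) (g : α → ℕ) {w : ℕ → ℤ}
    (hw : ∀ j, 0 ≤ w j) (L : ℕ) :
    ∑ j ∈ range L, w j * #{a ∈ P | j < g a} ≤ ∑ a ∈ P, ∑ j ∈ range (g a), w j := by
  calc ∑ j ∈ range L, w j * #{a ∈ P | j < g a}
      = ∑ a ∈ P, ∑ j ∈ range L with j < g a, w j := by
        simp only [sum_filter, mul_comm (w _), ← nsmul_eq_mul, ← sum_const]
        exact sum_comm
    _ ≤ _ := sum_le_sum fun a _ ↦ sum_le_sum_of_subset_of_nonneg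
        (fun j hj ↦ mem_range.2 (mem_filter.1 hj).2) fun j _ _ ↦ hw j

lemma card_filter_natAbs_div_two_le {α : Type*} (P : Finset α) (f : α → ℤ) {e M : ℕ}
    (hpar : ∀ a ∈ P, f a % 2 = e) (hfib : ∀ v, #{a ∈ P | f a = v} ≤ M) (j : ℕ) :
    #{a ∈ P | (f a).natAbs / 2 ≤ j} ≤ M * (2 * j + 1 + e) :=
  calc #{a ∈ P | (f a).natAbs / 2 ≤ j}
      ≤ M * #((range (2 * j + 1 + e)).image fun i : ℕ ↦ (2 * i - (2 * j + e) : ℤ)) := by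
        refine card_le_mul_card_image_of_maps_to (f := f) (fun a ha ↦ ?_) M fun v _ ↦
          (card_le_card (filter_subset_filter _ (filter_subset _ _))).trans (hfib v)
        obtain ⟨ha, hj⟩ := mem_filter.1 ha
        have := hpar a ha
        exact mem_image.2 ⟨(f a + 2 * j + e).toNat / 2, mem_range.2 (by omega), by omega⟩
    _ ≤ M * (2 * j + 1 + e) := Nat.mul_le_mul_left _ (card_image_le.trans (card_range _).le)

/-- The squares are smallest when the values fill the levels `±e, ±(2 + e), …` in order, each
with `M` entries; `g a` is the number of levels strictly below `|f a|`. -/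
theorem sq_lt_sum_sq_of_card_fiber_le {α : Type*} (P : Finset α) (f : α → ℤ) {e M k : ℕ}
    (he : e ≤ 1) (hpar : ∀ a ∈ P, f a % 2 = e) (hfib : ∀ v, #{a ∈ P | f a = v} ≤ M)
    (hk : 2 ≤ k) (hMk : M ≤ 2 * k) (hP : #P + 1 = 2 * M * k) :
    ((M * k : ℕ) : ℤ) ^ 2 < ∑ a ∈ P, f a ^ 2 := by
  obtain ⟨g, hg⟩ : ∃ g : α → ℕ, ∀ a, g a = (f a).natAbs / 2 := ⟨_, fun _ ↦ rfl⟩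
  have hsq : ∀ a ∈ P, f a ^ 2 = 4 * ∑ j ∈ range (g a), (2 * j + 1 + e : ℤ) + e := by
    intro a ha
    have habs : (f a).natAbs = 2 * g a + e := by have := hpar a ha; have := hg a; omega
    rw [← Int.natAbs_sq, habs, sum_range_two_mul_add_one_add]
    interval_cases e <;> push_cast <;> ring
  have hlayer : ∀ j : ℕ, (#P : ℤ) - M * (2 * j + 1 + e) ≤ #{a ∈ P | j < g a} := by
    intro j
    have hlow : #{a ∈ P | g a ≤ j} ≤ M * (2 * j + 1 + e) := by
      simpa only [hg] using card_filter_natAbs_div_two_le P f hpar hfib j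
    have hsplit := card_filter_add_card_filter_not (s := P) (p := fun a ↦ g a ≤ j)
    simp only [not_le] at hsplit
    have : (#{a ∈ P | g a ≤ j} : ℤ) ≤ M * (2 * j + 1 + e) := by exact_mod_cast hlow
    omega
  have hM : 1 ≤ M := Nat.one_le_iff_ne_zero.2 (by rintro rfl; simp at hP)
  have hN : (#P : ℤ) + 1 = 2 * M * k := by exact_mod_cast hP
  calc ((M * k : ℕ) : ℤ) ^ 2
      < 4 * ∑ j ∈ range (k - e), (2 * j + 1 + e) * ((#P : ℤ) - M * (2 * j + 1 + e)) + e * #P :=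
        sq_lt_layer_sum he hk hM hMk hN
    _ ≤ 4 * ∑ j ∈ range (k - e), (2 * j + 1 + e) * (#{a ∈ P | j < g a} : ℤ) + e * #P := by
        gcongr with j
        exact hlayer j
    _ ≤ 4 * ∑ a ∈ P, ∑ j ∈ range (g a), (2 * j + 1 + e : ℤ) + e * #P := by
        gcongr
        exact sum_range_mul_card_lt_le P g (fun j ↦ by positivity) _
    _ = ∑ a ∈ P, f a ^ 2 := by
        rw [sum_congr rfl hsq, sum_add_distrib, ← mul_sum, sum_const, nsmul_eq_mul]
        ring

end LayerCount

lemma Submodule.card_le_of_sub_mem {K V : Type*} [Field K] [AddCommGroup V] [Module K V]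
    [Finite V] (W : Submodule K V) {s : Finset V} {a₀ : V} (h : ∀ a ∈ s, a - a₀ ∈ W) :
    #s ≤ Nat.card K ^ finrank K W := by
  rw [← Module.natCard_eq_pow_finrank, ← Nat.card_eq_finsetCard]
  exact Nat.card_le_card_of_injective (fun a ↦ ⟨a - a₀, h a a.2⟩) fun a b hab ↦
    Subtype.ext (sub_left_injective (congrArg Subtype.val hab))

lemma dotProductBilin_nondegenerate (R ι : Type*) [CommSemiring R] [Fintype ι] [DecidableEq ι] :
    (dotProductBilin R R : LinearMap.BilinForm R (ι → R)).Nondegenerate :=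
  ⟨fun x hx ↦ dotProduct_eq_zero x hx,
    fun y hy ↦ dotProduct_eq_zero y fun x ↦ by rw [dotProduct_comm]; exact hy x⟩

section Walsh

variable {ι : Type*} [Fintype ι]

def walsh (b x : ι → ZMod 2) : ℤ := (-1) ^ (b ⬝ᵥ x).val

lemma walsh_add_right (b x y : ι → ZMod 2) : walsh b (x + y) = walsh b x * walsh b y := by
  rw [walsh, walsh, walsh, dotProduct_add]
  generalize b ⬝ᵥ x = z
  generalize b ⬝ᵥ y = z'
  revert z z'
  decide

lemma walsh_comm (b x : ι → ZMod 2) : walsh b x = walsh x b := by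
  rw [walsh, dotProduct_comm, walsh]

lemma walsh_add_left (a b x : ι → ZMod 2) : walsh (a + b) x = walsh a x * walsh b x := by
  rw [walsh_comm, walsh_add_right, walsh_comm x, walsh_comm x]

lemma walsh_mul_self (b x : ι → ZMod 2) : walsh b x * walsh b x = 1 := by
  rw [← walsh_add_right, ZModModule.add_self, walsh, dotProduct_zero, ZMod.val_zero, pow_zero]

lemma walsh_eq_one_iff {b x : ι → ZMod 2} : walsh b x = 1 ↔ b ⬝ᵥ x = 0 := by
  rw [walsh]
  generalize b ⬝ᵥ x = z
  revert z
  decide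

lemma walsh_zero_left (x : ι → ZMod 2) : walsh 0 x = 1 := walsh_eq_one_iff.2 (zero_dotProduct x)

lemma two_dvd_walsh_sub_one (b x : ι → ZMod 2) : (2 : ℤ) ∣ walsh b x - 1 := by
  rw [walsh]
  generalize b ⬝ᵥ x = z
  revert z
  decide

def walshVec (b : ι → ZMod 2) : (ι → ZMod 2) → ℝ := fun x ↦ walsh b x

variable [DecidableEq ι]

lemma sum_walsh (b : ι → ZMod 2) :
    ∑ x, walsh b x = if b = 0 then (Fintype.card (ι → ZMod 2) : ℤ) else 0 := by
  split_ifs with hb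
  · simp [hb, walsh_zero_left]
  obtain ⟨i, hi⟩ := Function.ne_iff.1 hb
  have hflip : walsh b (Pi.single i 1) ≠ 1 := by
    rw [Ne, walsh_eq_one_iff, dotProduct_single, mul_one]
    exact hi
  refine eq_zero_of_mul_eq_self_left hflip ?_
  rw [mul_sum]
  exact Fintype.sum_equiv (Equiv.addLeft (Pi.single i 1)) _ _ fun x ↦ (walsh_add_right ..).symm

lemma sum_walsh_add (y z : ι → ZMod 2) :
    ∑ b, walsh b (y + z) = if y = z then (Fintype.card (ι → ZMod 2) : ℤ) else 0 := by
  simp_rw [walsh_comm _ (y + z), sum_walsh, ← ZModModule.sub_eq_add, sub_eq_zero]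

lemma sum_walshVec_dotProduct_smul (y : (ι → ZMod 2) → ℝ) :
    ∑ b, (walshVec b ⬝ᵥ y) • walshVec b = (Fintype.card (ι → ZMod 2) : ℝ) • y := by
  ext x
  have hcol : ∀ z, ∑ b, walshVec b z * walshVec b x =
      if z = x then (Fintype.card (ι → ZMod 2) : ℝ) else 0 := by
    intro z
    have h := congrArg (Int.cast : ℤ → ℝ) (sum_walsh_add z x)
    push_cast [walsh_add_right, apply_ite (Int.cast : ℤ → ℝ)] at h
    exact h
  calc (∑ b, (walshVec b ⬝ᵥ y) • walshVec b) x
      = ∑ z, y z * ∑ b, walshVec b z * walshVec b x := by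
        simp only [Finset.sum_apply, Pi.smul_apply, smul_eq_mul, dotProduct, sum_mul, mul_sum]
        rw [sum_comm]
        exact sum_congr rfl fun z _ ↦ sum_congr rfl fun b _ ↦ by ring
    _ = _ := by
        simp only [hcol, mul_ite, mul_zero, sum_ite_eq', mem_univ, if_true]
        rw [Pi.smul_apply, smul_eq_mul, mul_comm]

end Walsh

section CayleySpectrum

variable {ι : Type*} [Fintype ι] (C : Finset (ι → ZMod 2))

def cayleyEigenvalue (b : ι → ZMod 2) : ℤ := ∑ c ∈ C, walsh b c

lemma cayleyEigenvalue_zero : cayleyEigenvalue C 0 = #C := by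
  simp [cayleyEigenvalue, walsh_zero_left]

lemma cayleyEigenvalue_emod_two (b : ι → ZMod 2) : cayleyEigenvalue C b % 2 = #C % 2 := by
  have : (2 : ℤ) ∣ cayleyEigenvalue C b - #C := by
    rw [cayleyEigenvalue, card_eq_sum_ones, Nat.cast_sum, Nat.cast_one, ← sum_sub_distrib]
    exact dvd_sum fun x _ ↦ two_dvd_walsh_sub_one b x
  omega

variable [DecidableEq ι]

def eigenClass (v : ℤ) : Finset (ι → ZMod 2) := {b | cayleyEigenvalue C b = v}

lemma mem_eigenClass {v : ℤ} {b : ι → ZMod 2} :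
    b ∈ eigenClass C v ↔ cayleyEigenvalue C b = v := by
  simp [eigenClass]

lemma addCayleyAdj_transpose : (addCayleyAdj C)ᵀ = addCayleyAdj C := by
  ext g h
  simp only [addCayleyAdj, transpose_apply, of_apply, ZModModule.sub_eq_add, add_comm]

lemma addCayleyAdj_mulVec_walshVec (b : ι → ZMod 2) :
    addCayleyAdj C *ᵥ walshVec b = (cayleyEigenvalue C b : ℝ) • walshVec b := by
  ext x
  simp only [mulVec, dotProduct, addCayleyAdj, of_apply, Pi.smul_apply, smul_eq_mul, walshVec,
    cayleyEigenvalue, Int.cast_sum, sum_mul]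
  rw [← Fintype.sum_equiv (Equiv.addRight x)
    (fun c ↦ if c ∈ C then (walsh b c : ℝ) * walsh b x else 0) _ fun c ↦ by simp [walsh_add_right]]
  rw [sum_ite_mem, univ_inter]

lemma walshVec_dotProduct_eq_zero {μ : ℝ} {y : (ι → ZMod 2) → ℝ}
    (hy : addCayleyAdj C *ᵥ y = μ • y) {b : ι → ZMod 2} (hb : (cayleyEigenvalue C b : ℝ) ≠ μ) :
    walshVec b ⬝ᵥ y = 0 := by
  have h : μ * (walshVec b ⬝ᵥ y) = cayleyEigenvalue C b * (walshVec b ⬝ᵥ y) := by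
    rw [← smul_eq_mul, ← dotProduct_smul, ← hy, dotProduct_mulVec, ← mulVec_transpose,
      addCayleyAdj_transpose, addCayleyAdj_mulVec_walshVec, smul_dotProduct, smul_eq_mul]
  exact (mul_eq_mul_right_iff.1 h).resolve_left hb.symm

lemma sum_sq_cayleyEigenvalue :
    ∑ b, cayleyEigenvalue C b ^ 2 = Fintype.card (ι → ZMod 2) * #C := by
  simp only [sq, cayleyEigenvalue, sum_mul_sum, ← walsh_add_right]
  rw [sum_comm, mul_comm, ← nsmul_eq_mul, ← sum_const]
  refine sum_congr rfl fun c hc ↦ ?_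
  simp only [sum_comm (s := univ), sum_walsh_add, sum_ite_eq, hc, if_true]

noncomputable def eigenProj (v : ℤ) : Matrix (ι → ZMod 2) (ι → ZMod 2) ℝ :=
  (Fintype.card (ι → ZMod 2) : ℝ)⁻¹ • ∑ b ∈ eigenClass C v, vecMulVec (walshVec b) (walshVec b)

variable {C}

lemma eigenProj_mulVec (v : ℤ) (y : (ι → ZMod 2) → ℝ) :
    eigenProj C v *ᵥ y = (Fintype.card (ι → ZMod 2) : ℝ)⁻¹ •
      ∑ b ∈ eigenClass C v, (walshVec b ⬝ᵥ y) • walshVec b := by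
  simp only [eigenProj, smul_mulVec, sum_mulVec, vecMulVec_mulVec, op_smul_eq_smul]

lemma mulVec_eigenProj_mulVec (v : ℤ) (y : (ι → ZMod 2) → ℝ) :
    addCayleyAdj C *ᵥ (eigenProj C v *ᵥ y) = (v : ℝ) • (eigenProj C v *ᵥ y) := by
  simp only [eigenProj_mulVec, mulVec_smul, mulVec_sum, addCayleyAdj_mulVec_walshVec, smul_sum]
  refine sum_congr rfl fun b hb ↦ ?_
  rw [(mem_eigenClass C).1 hb]
  module

lemma eigenProj_mulVec_of_mulVec_eq {v : ℤ} {y : (ι → ZMod 2) → ℝ}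
    (hy : addCayleyAdj C *ᵥ y = (v : ℝ) • y) : eigenProj C v *ᵥ y = y := by
  have hsupp : ∑ b ∈ eigenClass C v, (walshVec b ⬝ᵥ y) • walshVec b =
      ∑ b, (walshVec b ⬝ᵥ y) • walshVec b := by
    refine sum_subset (subset_univ _) fun b _ hb ↦ ?_
    have hne : (cayleyEigenvalue C b : ℝ) ≠ v := by
      exact_mod_cast fun h ↦ hb ((mem_eigenClass C).2 h)
    rw [walshVec_dotProduct_eq_zero C hy hne, zero_smul]
  rw [eigenProj_mulVec, hsupp, sum_walshVec_dotProduct_smul, inv_smul_smul₀ (by positivity)]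

lemma isEigenProjection_eigenProj (v : ℤ) :
    IsEigenProjection (addCayleyAdj C) v (eigenProj C v) := by
  refine ⟨?_, ?_, mulVec_eigenProj_mulVec v, fun y hy ↦ eigenProj_mulVec_of_mulVec_eq hy⟩
  · refine ext_iff_mulVec.2 fun y ↦ ?_
    rw [← mulVec_mulVec, eigenProj_mulVec_of_mulVec_eq (mulVec_eigenProj_mulVec v y)]
  · simp only [IsSymm, eigenProj, transpose_smul, transpose_sum, transpose_vecMulVec]

lemma walshVec_dotProduct_eigenProj_mulVec {b : ι → ZMod 2} (y : (ι → ZMod 2) → ℝ) :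
    walshVec b ⬝ᵥ (eigenProj C (cayleyEigenvalue C b) *ᵥ y) = walshVec b ⬝ᵥ y := by
  rw [dotProduct_mulVec, ← mulVec_transpose, (isEigenProjection_eigenProj _).2.1.eq,
    eigenProj_mulVec_of_mulVec_eq (addCayleyAdj_mulVec_walshVec C b)]

lemma StronglyCospectral.walsh_sub_eq_one {u v : ι → ZMod 2}
    (h : StronglyCospectral (addCayleyAdj C) u v) {a b : ι → ZMod 2}
    (hab : cayleyEigenvalue C a = cayleyEigenvalue C b) : walsh (a - b) (u - v) = 1 := by
  obtain ⟨s, hs, hE⟩ : ∃ s : ℤ, s * s = 1 ∧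
      eigenProj C (cayleyEigenvalue C a) *ᵥ Pi.single u 1 =
        (s : ℝ) • eigenProj C (cayleyEigenvalue C a) *ᵥ Pi.single v 1 := by
    rcases h _ _ (isEigenProjection_eigenProj (cayleyEigenvalue C a)) with h | h
    exacts [⟨1, rfl, by rw [Int.cast_one, one_smul, h]⟩,
      ⟨-1, rfl, by rw [Int.cast_neg, Int.cast_one, neg_one_smul, h]⟩]
  have hsign : ∀ c, cayleyEigenvalue C c = cayleyEigenvalue C a → walsh c u = s * walsh c v := by
    intro c hc
    have hcoord : ∀ w, walshVec c ⬝ᵥ (eigenProj C (cayleyEigenvalue C a) *ᵥ Pi.single w 1) =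
        walsh c w := by
      intro w
      rw [← hc, walshVec_dotProduct_eigenProj_mulVec, dotProduct_single, mul_one]
      rfl
    have : (walsh c u : ℝ) = s * walsh c v := by
      rw [← hcoord u, hE, dotProduct_smul, hcoord v, smul_eq_mul]
    exact_mod_cast this
  rw [ZModModule.sub_eq_add, ZModModule.sub_eq_add, walsh_add_left, walsh_add_right,
    walsh_add_right, hsign a rfl, hsign b hab.symm]
  linear_combination (walsh a v * walsh a v * walsh b v * walsh b v) * hs +
    (walsh b v * walsh b v) * walsh_mul_self a v + walsh_mul_self b v

end CayleySpectrum

section ClassSpan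

variable {ι : Type*} [Fintype ι] [DecidableEq ι] (C : Finset (ι → ZMod 2))

def eigenClassSpan : Submodule (ZMod 2) (ι → ZMod 2) :=
  Submodule.span (ZMod 2) {x | ∃ a b, cayleyEigenvalue C a = cayleyEigenvalue C b ∧ a - b = x}

lemma card_eigenClass_le (v : ℤ) :
    #(eigenClass C v) ≤ 2 ^ finrank (ZMod 2) (eigenClassSpan C) := by
  rcases (eigenClass C v).eq_empty_or_nonempty with h | ⟨a₀, ha₀⟩
  · simp [h]
  have key := (eigenClassSpan C).card_le_of_sub_mem (a₀ := a₀) fun a ha ↦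
    Submodule.subset_span
      ⟨a, a₀, ((mem_eigenClass C).1 ha).trans ((mem_eigenClass C).1 ha₀).symm, rfl⟩
  rwa [Nat.card_zmod] at key

theorem exists_card_eigenClass_gt {M k : ℕ} (hk : 2 ≤ k) (hMk : M ≤ 2 * k)
    (hcard : M * (2 * k) = Fintype.card (ι → ZMod 2)) :
    ∃ v, M < #(eigenClass C v) := by
  by_contra! hle
  have hP : #(univ.erase (0 : ι → ZMod 2)) + 1 = 2 * M * k := by
    rw [card_erase_add_one (mem_univ _), card_univ, ← hcard]
    ring
  have hlt := sq_lt_sum_sq_of_card_fiber_le (univ.erase 0) (cayleyEigenvalue C) (e := #C % 2)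
    (Nat.le_of_lt_succ (Nat.mod_lt _ two_pos))
    (fun b _ ↦ by rw [cayleyEigenvalue_emod_two]; push_cast; rfl)
    (fun v ↦ (card_le_card fun b hb ↦ (mem_eigenClass C).2 (mem_filter.1 hb).2).trans (hle v))
    hk hMk hP
  have henergy := sum_sq_cayleyEigenvalue C
  rw [← add_sum_erase _ _ (mem_univ 0), cayleyEigenvalue_zero, ← hcard] at henergy
  push_cast at hlt henergy
  nlinarith [sq_nonneg ((M : ℤ) * k - #C)]

variable {C}

lemma StronglyCospectral.sub_mem_orthogonal_eigenClassSpan {u v : ι → ZMod 2}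
    (h : StronglyCospectral (addCayleyAdj C) u v) :
    u - v ∈ LinearMap.BilinForm.orthogonal (dotProductBilin (ZMod 2) (ZMod 2))
      (eigenClassSpan C) := by
  have hle : eigenClassSpan C ≤
      LinearMap.ker ((dotProductBilin (ZMod 2) (ZMod 2)).flip (u - v)) := by
    refine Submodule.span_le.2 ?_
    rintro _ ⟨a, b, hab, rfl⟩
    exact walsh_eq_one_iff.1 (h.walsh_sub_eq_one hab)
  exact fun n hn ↦ hle hn

lemma card_le_of_forall_stronglyCospectral {S : Finset (ι → ZMod 2)}
    (hS : ∀ u ∈ S, ∀ v ∈ S, StronglyCospectral (addCayleyAdj C) u v) :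
    #S ≤ 2 ^ (Fintype.card ι - finrank (ZMod 2) (eigenClassSpan C)) := by
  rcases S.eq_empty_or_nonempty with h | ⟨u₀, hu₀⟩
  · simp [h]
  have key := (LinearMap.BilinForm.orthogonal (dotProductBilin (ZMod 2) (ZMod 2))
    (eigenClassSpan C)).card_le_of_sub_mem (a₀ := u₀) fun u hu ↦
      (hS u hu u₀ hu₀).sub_mem_orthogonal_eigenClassSpan
  rwa [Nat.card_zmod, LinearMap.BilinForm.finrank_orthogonal (dotProductBilin_nondegenerate _ ι),
    Module.finrank_fintype_fun_eq_card] at key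

end ClassSpan

theorem stmt15_general (d : ℕ) (hd : 3 ≤ d) (C : Finset (Fin d → ZMod 2))
    (S : Finset (Fin d → ZMod 2))
    (hS : ∀ u ∈ S, ∀ v ∈ S, StronglyCospectral (addCayleyAdj C) u v) :
    S.card ≤ 2 ^ ((d + 1) / 2 - 1) := by
  set s := finrank (ZMod 2) (eigenClassSpan C)
  have hS' : #S ≤ 2 ^ (d - s) := by
    simpa using card_le_of_forall_stronglyCospectral hS
  have hs : d < 2 * s := by
    by_contra! hs
    have hk : 2 * 2 ^ (d - s - 1) = 2 ^ (d - s) := by rw [← pow_succ']; congr 1; omega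
    obtain ⟨v, hv⟩ := exists_card_eigenClass_gt C (M := 2 ^ s) (k := 2 ^ (d - s - 1))
      (le_self_pow₀ one_le_two (by omega)) (hk ▸ Nat.pow_le_pow_right two_pos (by omega))
      (by rw [hk, ← pow_add, Fintype.card_fun, ZMod.card, Fintype.card_fin]; congr 1; omega)
    exact (card_eigenClass_le C v).not_gt hv
  calc #S ≤ 2 ^ (d - s) := hS'
    _ ≤ 2 ^ ((d + 1) / 2 - 1) := Nat.pow_le_pow_right two_pos (by omega)

theorem stmt15 (d : ℕ) (hd : 3 ≤ d) (C : Finset (Fin d → ZMod 2)) (h0 : 0 ∉ C)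
    (S : Finset (Fin d → ZMod 2))
    (hS : ∀ u ∈ S, ∀ v ∈ S, StronglyCospectral (addCayleyAdj C) u v) :
    S.card ≤ 2 ^ ((d + 1) / 2 - 1) :=
  stmt15_general d hd C S hS
end

section
/- Let d ≥ 5 be odd, G = Z_2^d with standard basis e_1,...,e_d, and let C = C_1 ∪ C_2 ∪ C_3 ∪ C_4 where C_1 = {e_1,...,e_d}, C_2 = {e_1+e_2, e_1+e_3, e_2+e_3}, C_3 = {e_i+e_j : 4 ≤ i < j ≤ d}, C_4 = {e_1+e_2+e_3+e_i : 4 ≤ i ≤ d}. Then in the cubelike graph X(G, C), the four vertices 0, e_1+e_2+e_3, e_1+⋯+e_d, and e_4+⋯+e_d are pairwise strongly cospectral; in particular the maximal strongly cospectral subgroup has order at least 4. -/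
open Matrix

/-!
The characters `χ_a(x) = (-1)^(a ⬝ᵥ x)` of `ℤ₂^d` are eigenvectors of every cubelike graph
`X(ℤ₂^d, C)`, with eigenvalue `λ(a) = ∑_{c ∈ C} χ_a(c)`, and they span. So if `χ_a(h)` is a function
of `λ(a)`, translation by `h` acts on each eigenspace as a sign; applied to the columns of a
symmetric spectral idempotent `E` this gives `E e_{v+h} = ±E e_v`. Such `h` form a subgroup.

For the connection set at hand put `ε_i = χ_a(e_i)`, `T = ε₁ + ε₂ + ε₃`, `P = ε₁ε₂ε₃` and
`S = ∑_{i ≥ 4} ε_i`. The four pieces of `C` contribute `T + S`, `(T² - 3)/2`, `(S² - (d - 3))/2`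
and `PS` to `λ(a)`. As `d - 3` is even, so is `S`, and `2λ(a) + d - 3` modulo 16 determines
`P = χ_a(e₁ + e₂ + e₃)` and `S` modulo 4; the latter determines `∏_{i ≥ 4} ε_i`, hence
`χ_a(e₁ + ⋯ + e_d) = P ∏_{i ≥ 4} ε_i`.
-/

open Finset

namespace Cubelike

variable {ι : Type*} [Fintype ι]

def chi (a : ι → ZMod 2) : AddChar (ι → ZMod 2) ℤ where
  toFun x := if a ⬝ᵥ x = 0 then 1 else -1
  map_zero_eq_one' := by simp
  map_add_eq_mul' x y := by
    rw [dotProduct_add]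
    generalize a ⬝ᵥ x = s
    generalize a ⬝ᵥ y = t
    revert s t
    decide

lemma chi_apply (a x : ι → ZMod 2) : chi a x = if a ⬝ᵥ x = 0 then 1 else -1 := rfl

lemma chi_comm (a x : ι → ZMod 2) : chi a x = chi x a := by
  rw [chi_apply, chi_apply, dotProduct_comm]

lemma chi_eq_one_or_eq_neg_one (a x : ι → ZMod 2) : chi a x = 1 ∨ chi a x = -1 := by
  rw [chi_apply]; split_ifs <;> simp

lemma chi_mul_self (a x : ι → ZMod 2) : chi a x * chi a x = 1 := by
  rcases chi_eq_one_or_eq_neg_one a x with h | h <;> simp [h]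

lemma chi_sum {κ : Type*} (a : ι → ZMod 2) (s : Finset κ) (v : κ → ι → ZMod 2) :
    chi a (∑ k ∈ s, v k) = ∏ k ∈ s, chi a (v k) := by
  induction s using Finset.cons_induction with
  | empty => simp
  | cons k s hk ih => rw [sum_cons, prod_cons, AddChar.map_add_eq_mul, ih]

variable [DecidableEq ι]

lemma chi_eq_zero_iff (w : ι → ZMod 2) : chi w = 0 ↔ w = 0 := by
  refine ⟨fun h => funext fun i => ?_, fun h => by ext x; simp [chi_apply, h]⟩
  have := DFunLike.congr_fun h (Pi.single i 1)
  simpa [chi_apply, dotProduct_single] using this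

lemma sum_chi_apply (w : ι → ZMod 2) :
    ∑ a, chi a w = if w = 0 then (Fintype.card (ι → ZMod 2) : ℤ) else 0 := by
  simp only [chi_comm _ w, AddChar.sum_eq_ite, chi_eq_zero_iff]

def charVec (a : ι → ZMod 2) : (ι → ZMod 2) → ℝ := fun x => chi a x

lemma charVec_dotProduct_translate (a h : ι → ZMod 2) (y : (ι → ZMod 2) → ℝ) :
    charVec a ⬝ᵥ (fun x => y (x + h)) = chi a h * (charVec a ⬝ᵥ y) := by
  simp only [dotProduct, mul_sum]
  refine Fintype.sum_equiv (Equiv.addRight h) _ _ fun x => ?_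
  have hsq : (chi a h : ℝ) * chi a h = 1 := by exact_mod_cast chi_mul_self a h
  simp only [charVec, Equiv.coe_addRight, AddChar.map_add_eq_mul, Int.cast_mul]
  linear_combination (-(chi a x : ℝ) * y (x + h)) * hsq

theorem card_smul_eq_sum_charVec (y : (ι → ZMod 2) → ℝ) :
    (Fintype.card (ι → ZMod 2) : ℝ) • y = ∑ a, (charVec a ⬝ᵥ y) • charVec a := by
  ext x
  simp only [Pi.smul_apply, Finset.sum_apply, smul_eq_mul, dotProduct, sum_mul, charVec]
  rw [sum_comm]
  have horth (z : ι → ZMod 2) : ∑ a, (chi a z : ℝ) * y z * chi a x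
      = if z = x then (Fintype.card (ι → ZMod 2) : ℝ) * y z else 0 := by
    simp_rw [mul_right_comm _ (y z), ← Int.cast_mul, ← AddChar.map_add_eq_mul, ← sum_mul,
      ← Int.cast_sum, sum_chi_apply, ← ZModModule.sub_eq_add, sub_eq_zero]
    split_ifs <;> simp
  simp [horth]

theorem eq_zero_of_charVec_dotProduct_eq_zero {y : (ι → ZMod 2) → ℝ}
    (hy : ∀ a, charVec a ⬝ᵥ y = 0) : y = 0 := by
  have hinv := card_smul_eq_sum_charVec y
  simp only [hy, zero_smul, sum_const_zero] at hinv
  exact (smul_eq_zero.1 hinv).resolve_left (by positivity)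

def eigenvalue (C : Finset (ι → ZMod 2)) (a : ι → ZMod 2) : ℤ := ∑ c ∈ C, chi a c

lemma addCayleyAdj_transpose (C : Finset (ι → ZMod 2)) :
    (addCayleyAdj C)ᵀ = addCayleyAdj C := by
  ext x y
  simp [addCayleyAdj, ZModModule.sub_eq_add, add_comm]

theorem mulVec_charVec (C : Finset (ι → ZMod 2)) (a : ι → ZMod 2) :
    addCayleyAdj C *ᵥ charVec a = (eigenvalue C a : ℝ) • charVec a := by
  ext x
  simp only [mulVec, dotProduct, addCayleyAdj, of_apply, Pi.smul_apply, smul_eq_mul]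
  rw [← Fintype.sum_equiv (Equiv.addLeft x)
    (fun c => (if c ∈ C then (1 : ℝ) else 0) * charVec a (x + c)) _ (fun c => by simp)]
  simp [charVec, eigenvalue, AddChar.map_add_eq_mul, mul_sum, mul_comm]

theorem charVec_dotProduct_eq_zero {C : Finset (ι → ZMod 2)} {μ : ℝ} {y : (ι → ZMod 2) → ℝ}
    (hy : addCayleyAdj C *ᵥ y = μ • y) {a : ι → ZMod 2} (ha : (eigenvalue C a : ℝ) ≠ μ) :
    charVec a ⬝ᵥ y = 0 := by
  have h : μ * (charVec a ⬝ᵥ y) = eigenvalue C a * (charVec a ⬝ᵥ y) := by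
    rw [← smul_eq_mul, ← dotProduct_smul, ← hy, dotProduct_mulVec, ← mulVec_transpose,
      addCayleyAdj_transpose, mulVec_charVec, smul_dotProduct, smul_eq_mul]
  have : (eigenvalue C a - μ) * (charVec a ⬝ᵥ y) = 0 := by linear_combination -h
  exact (mul_eq_zero.1 this).resolve_left (sub_ne_zero.2 ha)

theorem apply_add_eq_mul_of_mulVec_eq {C : Finset (ι → ZMod 2)} {μ c : ℝ} {h : ι → ZMod 2}
    (hc : ∀ a, (eigenvalue C a : ℝ) = μ → (chi a h : ℝ) = c) {y : (ι → ZMod 2) → ℝ}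
    (hy : addCayleyAdj C *ᵥ y = μ • y) (x : ι → ZMod 2) : y (x + h) = c * y x := by
  have key : (fun x => y (x + h)) - c • y = 0 := by
    refine eq_zero_of_charVec_dotProduct_eq_zero fun a => ?_
    rw [dotProduct_sub, dotProduct_smul, charVec_dotProduct_translate, smul_eq_mul, ← sub_mul]
    by_cases ha : (eigenvalue C a : ℝ) = μ
    · rw [hc a ha, sub_self, zero_mul]
    · rw [charVec_dotProduct_eq_zero hy ha, mul_zero]
  simpa [sub_eq_zero] using congrFun key x

def cospectralSubgroup (C : Finset (ι → ZMod 2)) : AddSubgroup (ι → ZMod 2) where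
  carrier := {h | ∀ a b, eigenvalue C a = eigenvalue C b → chi a h = chi b h}
  zero_mem' := by simp
  add_mem' hx hy a b hab := by
    rw [AddChar.map_add_eq_mul, AddChar.map_add_eq_mul, hx a b hab, hy a b hab]
  neg_mem' := by simp [ZModModule.neg_eq_self]

theorem exists_apply_add_eq_mul {C : Finset (ι → ZMod 2)} {h : ι → ZMod 2}
    (hh : h ∈ cospectralSubgroup C) (μ : ℝ) :
    ∃ c : ℝ, (c = 1 ∨ c = -1) ∧ ∀ y : (ι → ZMod 2) → ℝ, addCayleyAdj C *ᵥ y = μ • y →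
      ∀ x, y (x + h) = c * y x := by
  by_cases hμ : ∃ b, (eigenvalue C b : ℝ) = μ
  · obtain ⟨b, hb⟩ := hμ
    refine ⟨chi b h, by rcases chi_eq_one_or_eq_neg_one b h with h' | h' <;> simp [h'],
      fun y hy => apply_add_eq_mul_of_mulVec_eq (fun a ha => ?_) hy⟩
    rw [hh a b (by exact_mod_cast ha.trans hb.symm)]
  · simp only [not_exists] at hμ
    exact ⟨1, Or.inl rfl,
      fun y hy => apply_add_eq_mul_of_mulVec_eq (fun a ha => absurd ha (hμ a)) hy⟩

theorem stronglyCospectral_of_add_mem {C : Finset (ι → ZMod 2)} {u v : ι → ZMod 2}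
    (huv : u + v ∈ cospectralSubgroup C) : StronglyCospectral (addCayleyAdj C) u v := by
  intro μ E ⟨_, hsymm, hcol, _⟩
  obtain ⟨c, hc, htrans⟩ := exists_apply_add_eq_mul huv μ
  have key : E *ᵥ Pi.single u 1 = c • E *ᵥ Pi.single v 1 := by
    ext i
    have := htrans _ (hcol (Pi.single i 1)) v
    simpa [mulVec_single_one, hsymm.apply, add_left_comm v u v, ZModModule.add_self] using this
  rcases hc with rfl | rfl <;> simp [key]

end Cubelike

theorem two_mul_sum_filter_lt {ι R : Type*} [LinearOrder ι] [CommRing R] (s : Finset ι)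
    (f : ι → R) :
    2 * ∑ p ∈ s ×ˢ s with p.1 < p.2, f p.1 * f p.2 = (∑ i ∈ s, f i) ^ 2 - ∑ i ∈ s, f i ^ 2 := by
  have hswap : ∑ p ∈ s ×ˢ s with p.2 < p.1, f p.1 * f p.2
      = ∑ p ∈ s ×ˢ s with p.1 < p.2, f p.1 * f p.2 :=
    sum_nbij' Prod.swap Prod.swap (by simp +contextual) (by simp +contextual) (by simp) (by simp)
      fun _ _ => mul_comm _ _
  have hdiag : ∑ p ∈ s ×ˢ s with p.1 = p.2, f p.1 * f p.2 = ∑ i ∈ s, f i ^ 2 :=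
    sum_nbij' Prod.fst (fun i => (i, i)) (by simp +contextual) (by simp) (by simp +contextual)
      (by simp +contextual) (by simp +contextual [sq])
  have hsplit : ∑ p ∈ s ×ˢ s with ¬ p.1 < p.2, f p.1 * f p.2
      = ∑ p ∈ s ×ˢ s with p.2 < p.1, f p.1 * f p.2
        + ∑ p ∈ s ×ˢ s with p.1 = p.2, f p.1 * f p.2 := by
    rw [← sum_filter_add_sum_filter_not _ (fun p => p.2 < p.1), filter_filter, filter_filter]
    congr 2 <;> ext p <;> simp only [mem_filter] <;> grind
  rw [sq, sum_mul_sum, ← sum_product',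
    ← sum_filter_add_sum_filter_not (s ×ˢ s) (fun p => p.1 < p.2), hsplit, hswap, hdiag]
  ring

lemma prod_eq_one_or_neg_one {ι : Type*} {s : Finset ι} {f : ι → ℤ}
    (hf : ∀ i ∈ s, f i = 1 ∨ f i = -1) :
    ∏ i ∈ s, f i = 1 ∨ ∏ i ∈ s, f i = -1 :=
  prod_induction f (fun z => z = 1 ∨ z = -1)
    (fun _ _ ha hb => by rcases ha with rfl | rfl <;> rcases hb with rfl | rfl <;> simp)
    (Or.inl rfl) hf

lemma sum_emod_four {ι : Type*} {s : Finset ι} {f : ι → ℤ}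
    (hf : ∀ i ∈ s, f i = 1 ∨ f i = -1) :
    (∑ i ∈ s, f i) % 4 = (#s + ∏ i ∈ s, f i - 1) % 4 := by
  induction s using Finset.cons_induction with
  | empty => simp
  | cons j s hj ih =>
    have hs : ∀ i ∈ s, f i = 1 ∨ f i = -1 := fun i hi => hf i (mem_cons_of_mem hi)
    have := ih hs
    rw [sum_cons, prod_cons, card_cons]
    rcases hf j (mem_cons_self j s) with h | h <;> rw [h] <;>
      rcases prod_eq_one_or_neg_one hs with h' | h' <;> rw [h'] at this ⊢ <;> push_cast <;> omega

lemma Int.sq_emod_four_eq_emod_two (u : ℤ) : u ^ 2 % 4 = u % 2 := by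
  rcases Int.even_or_odd' u with ⟨k, rfl | rfl⟩ <;> ring_nf <;> omega

lemma sign_triple_cases {x y z : ℤ} (hx : x = 1 ∨ x = -1) (hy : y = 1 ∨ y = -1)
    (hz : z = 1 ∨ z = -1) :
    (x * y * z = 1 ∧ ((x + y + z) ^ 2 + 2 * (x + y + z)) % 16 = 15) ∨
      (x * y * z = -1 ∧ (x + y + z) ^ 2 + 2 * (x + y + z) = 3) := by
  rcases hx with rfl | rfl <;> rcases hy with rfl | rfl <;> rcases hz with rfl | rfl <;> norm_num

/-- Modulo 16 the left side of `h` is `15, 11, 3, 7` according as `(P, s / 2 mod 2)` is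
`(1, 0), (1, 1), (-1, 0), (-1, 1)`. -/
lemma sign_eq_and_emod_four_eq_of_eq {T P s T' P' s' : ℤ}
    (hT : (P = 1 ∧ (T ^ 2 + 2 * T) % 16 = 15) ∨ (P = -1 ∧ T ^ 2 + 2 * T = 3))
    (hT' : (P' = 1 ∧ (T' ^ 2 + 2 * T') % 16 = 15) ∨ (P' = -1 ∧ T' ^ 2 + 2 * T' = 3))
    (hs : Even s) (hs' : Even s')
    (h : T ^ 2 + 2 * T + s ^ 2 + 2 * s + 2 * P * s
      = T' ^ 2 + 2 * T' + s' ^ 2 + 2 * s' + 2 * P' * s') :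
    P = P' ∧ s % 4 = s' % 4 := by
  obtain ⟨u, rfl⟩ := hs
  obtain ⟨v, rfl⟩ := hs'
  have hu := Int.sq_emod_four_eq_emod_two u
  have hv := Int.sq_emod_four_eq_emod_two v
  rw [show (u + u) ^ 2 = 4 * u ^ 2 by ring, show (v + v) ^ 2 = 4 * v ^ 2 by ring] at h
  rcases hT with ⟨rfl, hT⟩ | ⟨rfl, hT⟩ <;> rcases hT' with ⟨rfl, hT'⟩ | ⟨rfl, hT'⟩ <;>
    rcases Int.emod_two_eq_zero_or_one u with hu2 | hu2 <;>
    rcases Int.emod_two_eq_zero_or_one v with hv2 | hv2 <;> omega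

lemma card_insert_zero_add_eq_four {G : Type*} [AddCommGroup G] [Module (ZMod 2) G]
    [DecidableEq G] {x y : G} (hx : x ≠ 0) (hy : y ≠ 0) (hxy : x ≠ y) : #{0, x, y, x + y} = 4 := by
  have hxy' : x + y ≠ 0 := by
    rwa [Ne, add_eq_zero_iff_eq_neg, ZModModule.neg_eq_self]
  rw [card_insert_of_notMem, card_insert_of_notMem, card_insert_of_notMem, card_singleton] <;>
    simp [hx, hy, hxy, hxy'.symm, hx.symm, hy.symm]

namespace FourCospectral

open Cubelike

variable {d : ℕ}

def e (i : Fin d) : Fin d → ZMod 2 := Pi.single i 1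

/-- Indices are 0-based: `i₁, i₂, i₃` are the paper's `1, 2, 3`, and `high d` is `{4, …, d}`. -/
def i₁ (hd : 3 ≤ d) : Fin d := ⟨0, by omega⟩
def i₂ (hd : 3 ≤ d) : Fin d := ⟨1, by omega⟩
def i₃ (hd : 3 ≤ d) : Fin d := ⟨2, by omega⟩

def high (d : ℕ) : Finset (Fin d) := univ.filter fun i => 3 ≤ i.val

def C₁ (d : ℕ) : Finset (Fin d → ZMod 2) := univ.image e
def C₂ (hd : 3 ≤ d) : Finset (Fin d → ZMod 2) :=
  {e (i₁ hd) + e (i₂ hd), e (i₁ hd) + e (i₃ hd), e (i₂ hd) + e (i₃ hd)}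
def C₃ (d : ℕ) : Finset (Fin d → ZMod 2) :=
  ((univ : Finset (Fin d × Fin d)).filter fun p => 3 ≤ p.1.val ∧ p.1.val < p.2.val).image
    fun p => e p.1 + e p.2
def C₄ (hd : 3 ≤ d) : Finset (Fin d → ZMod 2) :=
  (high d).image fun i => e (i₁ hd) + e (i₂ hd) + e (i₃ hd) + e i
def C (hd : 3 ≤ d) : Finset (Fin d → ZMod 2) := C₁ d ∪ C₂ hd ∪ C₃ d ∪ C₄ hd

variable (hd : 3 ≤ d)

def lowSum (a : Fin d → ZMod 2) : ℤ :=
  chi a (e (i₁ hd)) + chi a (e (i₂ hd)) + chi a (e (i₃ hd))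
def lowProd (a : Fin d → ZMod 2) : ℤ :=
  chi a (e (i₁ hd)) * chi a (e (i₂ hd)) * chi a (e (i₃ hd))
def highSum (a : Fin d → ZMod 2) : ℤ := ∑ i ∈ high d, chi a (e i)

lemma e_injective : Function.Injective (e : Fin d → Fin d → ZMod 2) :=
  fun i j h => by simpa [e, Pi.single_apply, eq_comm] using congrFun h j

lemma e_add_e_eq_iff {k l m n : Fin d} :
    e k + e l = e m + e n ↔ k = m ∧ l = n ∨ k = n ∧ l = m ∨ k = l ∧ m = n := by
  simp only [e, Pi.single_add_single_eq_single_add_single one_ne_zero one_ne_zero]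
  simp [show (1 : ZMod 2) + 1 = 0 by decide]

@[to_additive]
lemma prod_univ_eq_mul_prod_high {M : Type*} [CommMonoid M] (F : Fin d → M) :
    ∏ i, F i = F (i₁ hd) * F (i₂ hd) * F (i₃ hd) * ∏ i ∈ high d, F i := by
  have hlow : univ.filter (fun i : Fin d => ¬ 3 ≤ i.val) = {i₁ hd, i₂ hd, i₃ hd} := by
    ext j; simp [i₁, i₂, i₃, Fin.ext_iff]; omega
  rw [← prod_filter_not_mul_prod_filter univ (fun i : Fin d => 3 ≤ i.val), hlow,
    prod_insert (by simp [i₁, i₂, i₃, Fin.ext_iff]), prod_insert (by simp [i₂, i₃, Fin.ext_iff]),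
    prod_singleton, high]
  simp only [mul_assoc]

lemma card_high (hd : 3 ≤ d) : #(high d) + 3 = d := by
  have := sum_univ_eq_add_sum_high hd (fun _ => (1 : ℕ))
  simp only [sum_const, card_univ, Fintype.card_fin, smul_eq_mul, mul_one] at this
  omega

lemma sum_C₁ (a : Fin d → ZMod 2) : ∑ c ∈ C₁ d, chi a c = lowSum hd a + highSum a := by
  rw [C₁, sum_image fun i _ j _ h => e_injective h, sum_univ_eq_add_sum_high hd]
  rfl

lemma two_mul_sum_C₂ (a : Fin d → ZMod 2) :
    2 * ∑ c ∈ C₂ hd, chi a c = lowSum hd a ^ 2 - 3 := by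
  rw [C₂, sum_insert (by simp [e_injective.eq_iff, e_add_e_eq_iff, i₁, i₂, i₃, Fin.ext_iff]),
    sum_insert (by simp [e_injective.eq_iff, i₁, i₂, Fin.ext_iff]), sum_singleton]
  simp only [AddChar.map_add_eq_mul, lowSum]
  linear_combination -chi_mul_self a (e (i₁ hd)) - chi_mul_self a (e (i₂ hd)) -
    chi_mul_self a (e (i₃ hd))

lemma two_mul_sum_C₃ (a : Fin d → ZMod 2) :
    2 * ∑ c ∈ C₃ d, chi a c = highSum a ^ 2 - #(high d) := by
  have hpairs : (univ.filter fun p : Fin d × Fin d => 3 ≤ p.1.val ∧ p.1.val < p.2.val)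
      = (high d ×ˢ high d).filter fun p => p.1 < p.2 := by
    ext p
    simp only [high, mem_filter, mem_univ, true_and, mem_product, Fin.lt_def]
    omega
  have hinj (p q : Fin d × Fin d) (hp : p.1 < p.2) (hq : q.1 < q.2)
      (h : e p.1 + e p.2 = e q.1 + e q.2) : p = q := by
    rcases e_add_e_eq_iff.1 h with ⟨h1, h2⟩ | ⟨h1, h2⟩ | ⟨h, -⟩
    · exact Prod.ext h1 h2
    · rw [← h1, ← h2] at hq; exact absurd hp (lt_asymm hq)
    · rw [h] at hp; exact absurd hp (lt_irrefl _)
  rw [C₃, hpairs, sum_image fun p hp q hq h => hinj p q (mem_filter.1 hp).2 (mem_filter.1 hq).2 h]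
  have hsq : ∑ i ∈ high d, chi a (e i) ^ 2 = #(high d) := by simp [sq, chi_mul_self]
  simp only [AddChar.map_add_eq_mul]
  rw [highSum, ← hsq]
  exact two_mul_sum_filter_lt (high d) fun i => chi a (e i)

lemma sum_C₄ (a : Fin d → ZMod 2) : ∑ c ∈ C₄ hd, chi a c = lowProd hd a * highSum a := by
  rw [C₄, sum_image fun i _ j _ h => e_injective (add_left_cancel h), highSum, mul_sum]
  simp only [AddChar.map_add_eq_mul, lowProd]

lemma sum_apply_e (i : Fin d) : ∑ j, e i j = 1 := by simp [e]

lemma sum_apply_eq_zero_of_mem {x : Fin d → ZMod 2} (hx : x ∈ C₂ hd ∪ (C₃ d ∪ C₄ hd)) :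
    ∑ j, x j = 0 := by
  simp only [C₂, C₃, C₄, mem_union, mem_insert, mem_singleton, mem_image] at hx
  rcases hx with (rfl | rfl | rfl) | ⟨p, -, rfl⟩ | ⟨i, -, rfl⟩ <;>
    simp only [Pi.add_apply, sum_add_distrib, sum_apply_e] <;> decide

lemma disjoint_C₁ : Disjoint (C₁ d) (C₂ hd ∪ (C₃ d ∪ C₄ hd)) := by
  rw [disjoint_left]
  rintro _ hx₁ hx
  obtain ⟨i, -, rfl⟩ := mem_image.1 hx₁
  exact one_ne_zero ((sum_apply_e i).symm.trans (sum_apply_eq_zero_of_mem hd hx))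

lemma disjoint_C₂_C₃ : Disjoint (C₂ hd) (C₃ d) := by
  simp only [disjoint_left, C₂, C₃, mem_image, mem_filter, mem_univ, true_and, mem_insert,
    mem_singleton]
  rintro _ (rfl | rfl | rfl) ⟨p, hp, h⟩ <;>
  · have h₁ := congrFun h (i₁ hd)
    have h₂ := congrFun h (i₂ hd)
    simp (disch := omega) [e, Pi.single_apply, i₁, i₂, i₃, Fin.ext_iff, if_neg] at h₁ h₂

lemma disjoint_C₂_C₄ : Disjoint (C₂ hd) (C₄ hd) := by
  simp only [disjoint_left, C₂, C₄, high, mem_image, mem_filter, mem_univ, true_and, mem_insert,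
    mem_singleton]
  rintro _ (rfl | rfl | rfl) ⟨i, hi, h⟩ <;>
  · have h₁ := congrFun h (i₁ hd)
    have h₂ := congrFun h (i₂ hd)
    have h₃ := congrFun h (i₃ hd)
    simp (disch := omega) [e, Pi.single_apply, i₁, i₂, i₃, Fin.ext_iff, if_neg] at h₁ h₂ h₃

lemma disjoint_C₃_C₄ : Disjoint (C₃ d) (C₄ hd) := by
  simp only [disjoint_left, C₃, C₄, high, mem_image, mem_filter, mem_univ, true_and]
  rintro _ ⟨p, hp, rfl⟩ ⟨i, hi, h⟩
  have h₁ := congrFun h (i₁ hd)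
  simp (disch := omega) [e, Pi.single_apply, i₁, i₂, i₃, Fin.ext_iff, if_neg] at h₁

theorem two_mul_eigenvalue (a : Fin d → ZMod 2) :
    2 * eigenvalue (C hd) a = lowSum hd a ^ 2 + 2 * lowSum hd a - 3
      + (highSum a ^ 2 + 2 * highSum a - #(high d)) + 2 * lowProd hd a * highSum a := by
  rw [eigenvalue, C, union_assoc, union_assoc,
    sum_union (disjoint_C₁ hd),
    sum_union (disjoint_union_right.2 ⟨disjoint_C₂_C₃ hd, disjoint_C₂_C₄ hd⟩),
    sum_union (disjoint_C₃_C₄ hd)]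
  linear_combination 2 * sum_C₁ hd a + two_mul_sum_C₂ hd a + two_mul_sum_C₃ a + 2 * sum_C₄ hd a

lemma highSum_emod_four (a : Fin d → ZMod 2) :
    highSum a % 4 = (#(high d) + ∏ i ∈ high d, chi a (e i) - 1) % 4 :=
  sum_emod_four fun _ _ => chi_eq_one_or_eq_neg_one _ _

lemma prod_high_eq_one_or_neg_one (a : Fin d → ZMod 2) :
    ∏ i ∈ high d, chi a (e i) = 1 ∨ ∏ i ∈ high d, chi a (e i) = -1 :=
  prod_eq_one_or_neg_one fun _ _ => chi_eq_one_or_eq_neg_one _ _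

lemma even_highSum (hd : 3 ≤ d) (hodd : Odd d) (a : Fin d → ZMod 2) : Even (highSum a) := by
  have hmod := highSum_emod_four a
  have hcard := card_high hd
  obtain ⟨k, rfl⟩ := hodd
  rw [Int.even_iff]
  rcases prod_high_eq_one_or_neg_one a with h | h <;> rw [h] at hmod <;> omega

lemma lowProd_cases (a : Fin d → ZMod 2) :
    (lowProd hd a = 1 ∧ (lowSum hd a ^ 2 + 2 * lowSum hd a) % 16 = 15) ∨
      (lowProd hd a = -1 ∧ lowSum hd a ^ 2 + 2 * lowSum hd a = 3) :=
  sign_triple_cases (chi_eq_one_or_eq_neg_one _ _) (chi_eq_one_or_eq_neg_one _ _)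
    (chi_eq_one_or_eq_neg_one _ _)

theorem lowProd_eq_and_highSum_emod_four_eq (hodd : Odd d) {a b : Fin d → ZMod 2}
    (h : eigenvalue (C hd) a = eigenvalue (C hd) b) :
    lowProd hd a = lowProd hd b ∧ highSum a % 4 = highSum b % 4 :=
  sign_eq_and_emod_four_eq_of_eq (lowProd_cases hd a) (lowProd_cases hd b)
    (even_highSum hd hodd a) (even_highSum hd hodd b)
    (by linear_combination two_mul_eigenvalue hd b - two_mul_eigenvalue hd a + 2 * h)

theorem e_add_e_add_e_mem_cospectralSubgroup (hodd : Odd d) :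
    e (i₁ hd) + e (i₂ hd) + e (i₃ hd) ∈ cospectralSubgroup (C hd) := by
  intro a b h
  simp only [AddChar.map_add_eq_mul]
  exact (lowProd_eq_and_highSum_emod_four_eq hd hodd h).1

theorem sum_e_mem_cospectralSubgroup (hodd : Odd d) :
    ∑ i, e i ∈ cospectralSubgroup (C hd) := by
  intro a b h
  obtain ⟨hP, hS⟩ := lowProd_eq_and_highSum_emod_four_eq hd hodd h
  have hQ : ∏ i ∈ high d, chi a (e i) = ∏ i ∈ high d, chi b (e i) := by
    have ha := highSum_emod_four a
    have hb := highSum_emod_four b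
    rcases prod_high_eq_one_or_neg_one a with h | h <;>
      rcases prod_high_eq_one_or_neg_one b with h' | h' <;>
      rw [h] at ha ⊢ <;> rw [h'] at hb ⊢ <;> omega
  rw [chi_sum, chi_sum, prod_univ_eq_mul_prod_high hd, prod_univ_eq_mul_prod_high hd, hQ]
  exact congrArg (· * _) hP

theorem card_eq_four (h4 : 4 ≤ d) :
    #{0, e (i₁ hd) + e (i₂ hd) + e (i₃ hd), ∑ i, e i,
      e (i₁ hd) + e (i₂ hd) + e (i₃ hd) + ∑ i, e i} = 4 := by
  have hσ (j : Fin d) : (∑ i, e i) j = 1 := by simp [e, Finset.sum_apply, Pi.single_apply]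
  refine card_insert_zero_add_eq_four (fun h => ?_) (fun h => ?_) (fun h => ?_)
  · have := congrFun h (i₁ hd)
    simp (disch := omega) [e, Pi.single_apply, i₁, i₂, i₃, Fin.ext_iff] at this
  · simpa [hσ] using congrFun h (i₁ hd)
  · have := congrFun h ⟨3, by omega⟩
    rw [hσ] at this
    simp (disch := omega) [e, Pi.single_apply, i₁, i₂, i₃, Fin.ext_iff] at this

end FourCospectral

open Cubelike

theorem stmt18 (d : ℕ) (hd : 5 ≤ d) (hodd : Odd d) :
    let e : Fin d → (Fin d → ZMod 2) := fun i => Pi.single i 1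
    let i1 : Fin d := ⟨0, by omega⟩
    let i2 : Fin d := ⟨1, by omega⟩
    let i3 : Fin d := ⟨2, by omega⟩
    let C1 : Finset (Fin d → ZMod 2) := Finset.univ.image e
    let C2 : Finset (Fin d → ZMod 2) := {e i1 + e i2, e i1 + e i3, e i2 + e i3}
    let C3 : Finset (Fin d → ZMod 2) :=
      ((Finset.univ : Finset (Fin d × Fin d)).filter
        (fun p => 3 ≤ p.1.val ∧ p.1.val < p.2.val)).image (fun p => e p.1 + e p.2)
    let C4 : Finset (Fin d → ZMod 2) :=
      ((Finset.univ : Finset (Fin d)).filter (fun i => 3 ≤ i.val)).image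
        (fun i => e i1 + e i2 + e i3 + e i)
    let C := C1 ∪ C2 ∪ C3 ∪ C4
    let g := e i1 + e i2 + e i3
    let σ := ∑ i, e i
    (∀ u ∈ ({0, g, σ, g + σ} : Finset (Fin d → ZMod 2)),
      ∀ v ∈ ({0, g, σ, g + σ} : Finset (Fin d → ZMod 2)),
        StronglyCospectral (addCayleyAdj C) u v) ∧
    ({0, g, σ, g + σ} : Finset (Fin d → ZMod 2)).card = 4 := by
  intro e i1 i2 i3 C1 C2 C3 C4 C g σ
  have hd3 : 3 ≤ d := by omega
  have hg : g ∈ cospectralSubgroup C := FourCospectral.e_add_e_add_e_mem_cospectralSubgroup hd3 hodd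
  have hσ : σ ∈ cospectralSubgroup C := FourCospectral.sum_e_mem_cospectralSubgroup hd3 hodd
  have hH : ∀ u ∈ ({0, g, σ, g + σ} : Finset (Fin d → ZMod 2)), u ∈ cospectralSubgroup C := by
    simp only [mem_insert, mem_singleton]
    rintro u (rfl | rfl | rfl | rfl)
    exacts [zero_mem _, hg, hσ, add_mem hg hσ]
  exact ⟨fun u hu v hv => stronglyCospectral_of_add_mem (add_mem (hH u hu) (hH v hv)),
    FourCospectral.card_eq_four hd3 (by omega)⟩
end
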